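/- arXiv:1510.04366 — 8 statements merged into one kernel-verified Lean document; each statement's English description precedes it below -/
import Mathlib

section
/- Let G be a graph on n vertices, φ a uniform automorphism of G with all orbits of size k, 𝒯_0 a transversal of the orbits (one vertex per orbit), 𝒯_ℓ = φ^ℓ(𝒯_0), and M an automorphism compatible matrix on G. With M_ℓ = M[𝒯_0, 𝒯_ℓ] and B_j = Σ_{ℓ=0}^{k-1} ω^{jℓ} M_ℓ where ω = e^{2πi/k}, the multiset of eigenvalues of M equals the union of the multisets of eigenvalues of B_0, B_1, ..., B_{k-1}. -/
open Matrix Polynomial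

/-- Conjugation by an explicitly invertible matrix preserves the characteristic
polynomial. -/
lemma charpoly_conj_aux {ι : Type*} [Fintype ι] [DecidableEq ι]
    (U V D : Matrix ι ι ℂ) (hUV : U * V = 1) (hVU : V * U = 1) :
    (U * D * V).charpoly = D.charpoly := by
  have hmapUV : U.map (C : ℂ →+* ℂ[X]) * V.map C = 1 := by
    rw [← Matrix.map_mul, hUV]; simp
  have hchar : charmatrix (U * D * V) =
      U.map (C : ℂ →+* ℂ[X]) * charmatrix D * V.map C := by
    unfold charmatrix
    simp only [RingHom.mapMatrix_apply]
    rw [Matrix.mul_sub, Matrix.sub_mul]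
    congr 1
    · rw [Matrix.scalar_apply, ← Matrix.smul_one_eq_diagonal, Matrix.mul_smul, Matrix.mul_one,
        Matrix.smul_mul, hmapUV]
    · rw [Matrix.map_mul, Matrix.map_mul]
  have hdet : (U.map (C : ℂ →+* ℂ[X])).det * (V.map C).det = 1 := by
    rw [← Matrix.det_mul, hmapUV, Matrix.det_one]
  unfold Matrix.charpoly
  rw [hchar, Matrix.det_mul, Matrix.det_mul]
  ring_nf
  rw [mul_comm ((U.map (C : ℂ →+* ℂ[X])).det), mul_assoc, hdet, mul_one]

lemma charmatrix_blockDiagonal_aux {o m : Type*} [Fintype o] [DecidableEq o]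
    [Fintype m] [DecidableEq m] (B : o → Matrix m m ℂ) :
    charmatrix (Matrix.blockDiagonal B) =
      Matrix.blockDiagonal (fun j => charmatrix (B j)) := by
  ext ⟨i, a⟩ ⟨i', b⟩
  rcases eq_or_ne a b with rfl | hab
  · rcases eq_or_ne i i' with rfl | hii
    · simp [Matrix.blockDiagonal_apply]
    · simp [Matrix.blockDiagonal_apply, charmatrix_apply, Matrix.diagonal,
        Prod.ext_iff, hii]
  · simp [Matrix.blockDiagonal_apply, charmatrix_apply, Matrix.diagonal,
      Prod.ext_iff, hab]

lemma charpoly_blockDiagonal_aux {o m : Type*} [Fintype o] [DecidableEq o]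
    [Fintype m] [DecidableEq m] (B : o → Matrix m m ℂ) :
    (Matrix.blockDiagonal B).charpoly = ∏ j, (B j).charpoly := by
  unfold Matrix.charpoly
  rw [charmatrix_blockDiagonal_aux, Matrix.det_blockDiagonal]

/-- Uniform equitable decomposition: if `φ` is an automorphism of a graph on `n`
vertices all of whose orbits have size `k` (encoded by a transversal
`τ : Fin r → Fin n` such that `(ℓ, i) ↦ φ^ℓ (τ i)` is a bijection and
`φ^k (τ i) = τ i`), and `M` is an automorphism compatible matrix
(`M (φ i) (φ j) = M i j`), then the multiset of eigenvalues of `M` equals the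
union of the multisets of eigenvalues of the matrices
`B j = ∑ ℓ, ω^(jℓ) • M[𝒯₀, 𝒯_ℓ]`, where `ω = e^{2πi/k}`. -/
theorem uniform_equitable_decomposition
    {n k r : ℕ} (hk : 0 < k)
    (φ : Equiv.Perm (Fin n))
    (M : Matrix (Fin n) (Fin n) ℂ)
    (hM : ∀ i j, M (φ i) (φ j) = M i j)
    (τ : Fin r → Fin n)
    (horb : Function.Bijective (fun p : Fin k × Fin r => (⇑φ)^[p.1.val] (τ p.2)))
    (hper : ∀ i, (⇑φ)^[k] (τ i) = τ i)
    (ω : ℂ) (hω : ω = Complex.exp (2 * Real.pi * Complex.I / k))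
    (Mblk : Fin k → Matrix (Fin r) (Fin r) ℂ)
    (hMblk : ∀ (ℓ : Fin k) (i j : Fin r), Mblk ℓ i j = M (τ i) ((⇑φ)^[ℓ.val] (τ j)))
    (B : Fin k → Matrix (Fin r) (Fin r) ℂ)
    (hB : ∀ j : Fin k, B j = ∑ m : Fin k, ω ^ (j.val * m.val) • Mblk m) :
    M.charpoly.roots = ∑ j : Fin k, (B j).charpoly.roots := by
  haveI : NeZero k := ⟨hk.ne'⟩
  -- basic facts about ω
  have hprim : IsPrimitiveRoot ω k := hω ▸ Complex.isPrimitiveRoot_exp k hk.ne'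
  have hωk : ω ^ k = 1 := hprim.pow_eq_one
  have hωmod : ∀ a : ℕ, ω ^ a = ω ^ (a % k) := by
    intro a
    conv_lhs => rw [← Nat.div_add_mod a k]
    rw [pow_add, pow_mul, hωk, one_pow, one_mul]
  have hωcongr : ∀ a b : ℕ, a % k = b % k → ω ^ a = ω ^ b := by
    intro a b h
    rw [hωmod a, hωmod b, h]
  -- geometric sums of roots of unity
  have hsum : ∀ d : ℕ, ∑ x : Fin k, ω ^ (x.val * d) = if k ∣ d then (k : ℂ) else 0 := by
    intro d
    have h1 : ∀ x : Fin k, ω ^ (x.val * d) = (ω ^ d) ^ x.val := fun x => by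
      rw [← pow_mul, mul_comm]
    rw [Finset.sum_congr rfl (fun x _ => h1 x), Fin.sum_univ_eq_sum_range (fun i => (ω ^ d) ^ i)]
    split_ifs with hdvd
    · have : ω ^ d = 1 := (hprim.pow_eq_one_iff_dvd d).mpr hdvd
      simp [this]
    · have hne1 : ω ^ d ≠ 1 := fun h => hdvd ((hprim.pow_eq_one_iff_dvd d).mp h)
      rw [geom_sum_eq hne1]
      have : (ω ^ d) ^ k = 1 := by rw [← pow_mul, mul_comm, pow_mul, hωk, one_pow]
      rw [this]
      simp
  -- divisibility characterization
  have hdvd : ∀ a b : Fin k, k ∣ (k - 1) * a.val + b.val ↔ a = b := by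
    intro a b
    constructor
    · intro h
      have h2 : (k : ℤ) ∣ ((k : ℤ) - 1) * a.val + b.val := by
        have := Int.natCast_dvd_natCast.mpr h
        push_cast [Nat.cast_sub hk] at this
        exact_mod_cast this
      have h3 : (k : ℤ) ∣ (b.val : ℤ) - a.val := by
        obtain ⟨c, hc⟩ := h2
        exact ⟨c - a.val, by linear_combination hc⟩
      have h4 : (b.val : ℤ) - a.val = 0 := by
        refine Int.eq_zero_of_abs_lt_dvd h3 ?_
        have ha := a.isLt
        have hb := b.isLt
        rw [abs_lt]
        constructor <;> [push_cast; push_cast] <;> omega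
      have : a.val = b.val := by omega
      exact Fin.ext this
    · rintro rfl
      refine ⟨a.val, ?_⟩
      rw [Nat.sub_one_mul, Nat.sub_add_cancel (Nat.le_mul_of_pos_left _ hk)]
  have key : ∀ a b : Fin k,
      ∑ x : Fin k, ω ^ (x.val * ((k - 1) * a.val + b.val)) = if a = b then (k : ℂ) else 0 := by
    intro a b
    rw [hsum]
    simp [hdvd a b]
  -- the reindexing equivalence
  set e : Fin k × Fin r ≃ Fin n := Equiv.ofBijective _ horb with he
  -- invariance of M under simultaneous iteration
  have hMiter : ∀ (t : ℕ) (a b : Fin n), M ((⇑φ)^[t] a) ((⇑φ)^[t] b) = M a b := by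
    intro t
    induction t with
    | zero => simp
    | succ t ih =>
      intro a b
      rw [Function.iterate_succ_apply', Function.iterate_succ_apply', hM]
      exact ih a b
  have hmod : ∀ (c : ℕ) (i : Fin r), (⇑φ)^[c] (τ i) = (⇑φ)^[c % k] (τ i) := by
    intro c
    induction c using Nat.strong_induction_on with
    | _ c ih =>
      intro i
      rcases lt_or_ge c k with h | h
      · rw [Nat.mod_eq_of_lt h]
      · have h1 : c = (c - k) + k := by omega
        rw [h1, Function.iterate_add_apply, hper, ih (c - k) (by omega) i]
        congr 1
        have h2 := Nat.mod_eq_sub_mod (a := (c - k) + k) (b := k) (by omega)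
        rw [h2, Nat.add_sub_cancel]
  -- entries of the reindexed matrix
  have hsub : ∀ (ℓ m : Fin k) (i j : Fin r),
      M ((⇑φ)^[ℓ.val] (τ i)) ((⇑φ)^[m.val] (τ j)) = Mblk (m - ℓ) i j := by
    intro ℓ m i j
    have hle : ℓ.val ≤ k := ℓ.isLt.le
    have h1 := hMiter (k - ℓ.val) ((⇑φ)^[ℓ.val] (τ i)) ((⇑φ)^[m.val] (τ j))
    rw [← Function.iterate_add_apply, ← Function.iterate_add_apply] at h1
    have h2 : k - ℓ.val + ℓ.val = k := by omega
    rw [h2, hper] at h1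
    have h4 : (m - ℓ).val = (k - ℓ.val + m.val) % k := by
      rw [Fin.sub_def]
    rw [hMblk, h4, ← h1, hmod (k - ℓ.val + m.val) j]
  -- define the Fourier conjugation matrices
  set U : Matrix (Fin k × Fin r) (Fin k × Fin r) ℂ :=
    fun p q => if p.2 = q.2 then ω ^ (p.1.val * q.1.val) else 0 with hU
  set V : Matrix (Fin k × Fin r) (Fin k × Fin r) ℂ :=
    fun p q => if p.2 = q.2 then (k : ℂ)⁻¹ * ω ^ ((k - 1) * (p.1.val * q.1.val)) else 0 with hV
  have hkne : (k : ℂ) ≠ 0 := Nat.cast_ne_zero.mpr hk.ne'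
  have hVU : V * U = 1 := by
    ext ⟨j, i⟩ ⟨j', i'⟩
    rw [Matrix.mul_apply, Fintype.sum_prod_type]
    simp only [hU, hV, ite_mul, zero_mul, mul_ite, mul_zero]
    simp only [Finset.sum_ite_eq, Finset.sum_ite_eq', Finset.mem_univ, if_true]
    rcases eq_or_ne i i' with rfl | hii
    · simp only [eq_self_iff_true, if_true]
      have hterm : ∀ ℓ : Fin k,
          (k : ℂ)⁻¹ * ω ^ ((k - 1) * (j.val * ℓ.val)) * ω ^ (ℓ.val * j'.val)
            = (k : ℂ)⁻¹ * ω ^ (ℓ.val * ((k - 1) * j.val + j'.val)) := by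
        intro ℓ
        rw [mul_assoc, ← pow_add]
        congr 2
        ring
      rw [Finset.sum_congr rfl fun ℓ _ => hterm ℓ, ← Finset.mul_sum, key j j']
      rcases eq_or_ne j j' with rfl | hjj
      · simp [Matrix.one_apply, hkne]
      · simp [Matrix.one_apply, hjj, Prod.ext_iff]
    · simp [hii, Matrix.one_apply, Prod.ext_iff]
  have hUV : U * V = 1 := by
    ext ⟨ℓ, i⟩ ⟨ℓ', i'⟩
    rw [Matrix.mul_apply, Fintype.sum_prod_type]
    simp only [hU, hV, ite_mul, zero_mul, mul_ite, mul_zero]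
    simp only [Finset.sum_ite_eq, Finset.sum_ite_eq', Finset.mem_univ, if_true]
    rcases eq_or_ne i i' with rfl | hii
    · simp only [eq_self_iff_true, if_true]
      have hterm : ∀ x : Fin k,
          ω ^ (ℓ.val * x.val) * ((k : ℂ)⁻¹ * ω ^ ((k - 1) * (x.val * ℓ'.val)))
            = (k : ℂ)⁻¹ * ω ^ (x.val * ((k - 1) * ℓ'.val + ℓ.val)) := by
        intro x
        rw [mul_comm (ω ^ (ℓ.val * x.val)), mul_assoc, ← pow_add]
        congr 2
        ring
      rw [Finset.sum_congr rfl fun x _ => hterm x, ← Finset.mul_sum, key ℓ' ℓ]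
      rcases eq_or_ne ℓ ℓ' with rfl | hll
      · simp [Matrix.one_apply, hkne]
      · simp [Matrix.one_apply, hll, Ne.symm hll, Prod.ext_iff]
    · simp [hii, Matrix.one_apply, Prod.ext_iff]
  -- the reindexed matrix and block diagonal target
  set M' : Matrix (Fin k × Fin r) (Fin k × Fin r) ℂ := M.submatrix e e with hM'def
  have hM' : ∀ p q : Fin k × Fin r, M' p q = Mblk (q.1 - p.1) p.2 q.2 := by
    intro p q
    show M (e p) (e q) = _
    have hep : e p = (⇑φ)^[p.1.val] (τ p.2) := rfl
    have heq : e q = (⇑φ)^[q.1.val] (τ q.2) := rfl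
    rw [hep, heq, hsub]
  set D : Matrix (Fin k × Fin r) (Fin k × Fin r) ℂ :=
    (Matrix.blockDiagonal B).submatrix Prod.swap Prod.swap with hD
  have hDapp : ∀ p q : Fin k × Fin r, D p q = if p.1 = q.1 then B p.1 p.2 q.2 else 0 := by
    intro p q
    rw [hD]
    simp [Matrix.blockDiagonal_apply]
  -- the key intertwining identity
  have hMU : M' * U = U * D := by
    ext ⟨ℓ, i⟩ ⟨j, i'⟩
    rw [Matrix.mul_apply, Matrix.mul_apply, Fintype.sum_prod_type, Fintype.sum_prod_type]
    have hlhs : ∀ m : Fin k, ∀ t : Fin r,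
        M' (ℓ, i) (m, t) * U (m, t) (j, i')
          = if t = i' then Mblk (m - ℓ) i t * ω ^ (m.val * j.val) else 0 := by
      intro m t
      rw [hM' (ℓ, i) (m, t), hU]
      by_cases h : t = i' <;> simp [h]
    have hrhs : ∀ m : Fin k, ∀ t : Fin r,
        U (ℓ, i) (m, t) * D (m, t) (j, i')
          = if i = t then (if m = j then ω ^ (ℓ.val * m.val) * B m t i' else 0) else 0 := by
      intro m t
      rw [hDapp (m, t) (j, i'), hU]
      by_cases h1 : i = t <;> by_cases h2 : m = j <;> simp [h1, h2]
    rw [Finset.sum_congr rfl fun m _ => Finset.sum_congr rfl fun t _ => hlhs m t,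
        Finset.sum_congr rfl fun m _ => Finset.sum_congr rfl fun t _ => hrhs m t]
    simp only [Finset.sum_ite_eq, Finset.sum_ite_eq', Finset.mem_univ, if_true]
    -- now: ∑ m, Mblk (m - ℓ) i i' * ω ^ (m * j) = ω ^ (ℓ * j) * B j i i'
    have hBij : B j i i' = ∑ m : Fin k, ω ^ (j.val * m.val) * Mblk m i i' := by
      rw [hB]
      simp [Finset.sum_apply, Matrix.sum_apply]
    rw [hBij, Finset.mul_sum]
    rw [← Equiv.sum_comp (Equiv.addRight ℓ)
      (fun m => Mblk (m - ℓ) i i' * ω ^ (m.val * j.val))]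
    refine Finset.sum_congr rfl fun s _ => ?_
    simp only [Equiv.coe_addRight, add_sub_cancel_right]
    have hpow : ω ^ ((s + ℓ).val * j.val) = ω ^ (ℓ.val * j.val) * ω ^ (j.val * s.val) := by
      rw [← pow_add]
      refine hωcongr _ _ ?_
      have : (s + ℓ).val = (s.val + ℓ.val) % k := by rw [Fin.add_def]
      rw [this, Nat.mod_mul_mod]
      congr 1
      ring
    rw [hpow]
    ring
  -- conclude equality of characteristic polynomials
  have hMeq : M' = U * D * V := by
    calc M' = M' * (U * V) := by rw [hUV, Matrix.mul_one]
    _ = (M' * U) * V := by rw [Matrix.mul_assoc]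
    _ = U * D * V := by rw [hMU]
  have hc1 : M.charpoly = M'.charpoly := by
    have : M' = Matrix.reindex e.symm e.symm M := by
      rw [hM'def]
      ext p q
      simp [Matrix.reindex_apply]
    rw [this, Matrix.charpoly_reindex]
  have hc2 : D.charpoly = (Matrix.blockDiagonal B).charpoly := by
    have : D = Matrix.reindex (Equiv.prodComm (Fin r) (Fin k))
        (Equiv.prodComm (Fin r) (Fin k)) (Matrix.blockDiagonal B) := by
      rw [hD]
      ext p q
      simp [Matrix.reindex_apply, Matrix.submatrix_apply]
    rw [this, Matrix.charpoly_reindex]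
  have hfinal : M.charpoly = ∏ j : Fin k, (B j).charpoly := by
    rw [hc1, hMeq, charpoly_conj_aux U V D hUV hVU, hc2, charpoly_blockDiagonal_aux]
  have hne : (∏ j : Fin k, (B j).charpoly) ≠ 0 :=
    Finset.prod_ne_zero_iff.mpr fun j _ => (Matrix.charpoly_monic (B j)).ne_zero
  rw [hfinal, Polynomial.roots_prod _ _ hne]
  rfl
end

section
/- Under the hypotheses of the uniform equitable decomposition theorem (φ a uniform automorphism of size k of G, M automorphism compatible, M_ℓ = M[𝒯_0, 𝒯_ℓ]), the matrix B_0 = Σ_{ℓ=0}^{k-1} M_ℓ equals the divisor matrix of M associated with the equitable partition of V(G) given by the orbits of φ: (B_0)_{ij} = Σ_{t ∈ V_j} m_{st} for any s ∈ V_i, where V_1,...,V_{n/k} are the orbits. -/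
open Matrix Finset

/-!
Vertex `s = φ^m (τ i)` is the image of `τ i` under `φ^m`, which preserves `M` and permutes
the orbit `V_j = {φ^ℓ (τ j)}` cyclically. Hence `∑_{t ∈ V_j} M s t` is `∑_ℓ M (τ i) (φ^ℓ (τ j))`
summed in a rotated order `ℓ ↦ ℓ + m mod k`.
-/

open Function

theorem Function.Periodic.sum_range_add {β : Type*} [AddCommMonoid β] {f : ℕ → β} {k : ℕ}
    (hf : Periodic f k) (m : ℕ) : ∑ ℓ ∈ range k, f (m + ℓ) = ∑ ℓ ∈ range k, f ℓ := by
  calc ∑ ℓ ∈ range k, f (m + ℓ)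
      = ∑ ℓ ∈ Ico m (m + k), f (ℓ % k) := by
        rw [sum_Ico_eq_sum_range, Nat.add_sub_cancel_left]
        exact sum_congr rfl fun ℓ _ => (hf.map_mod_nat _).symm
    _ = ∑ ℓ ∈ (Ico m (m + k)).image (· % k), f ℓ := (sum_image (Nat.mod_injOn_Ico m k)).symm
    _ = ∑ ℓ ∈ range k, f ℓ := by rw [Nat.image_Ico_mod]

theorem Function.apply_iterate_iterate {α β : Type*} {f : α → α} {M : α → α → β}
    (hM : ∀ a b, M (f a) (f b) = M a b) (t : ℕ) (a b : α) : M (f^[t] a) (f^[t] b) = M a b := by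
  induction t generalizing a b with
  | zero => rfl
  | succ t ih => rw [iterate_succ_apply, iterate_succ_apply, ih, hM]

theorem B0_eq_divisor_matrix_general
    {n k r : ℕ}
    (φ : Equiv.Perm (Fin n))
    (M : Matrix (Fin n) (Fin n) ℂ)
    (hM : ∀ i j, M (φ i) (φ j) = M i j)
    (τ : Fin r → Fin n)
    (horb : Function.Bijective (fun p : Fin k × Fin r => (⇑φ)^[p.1.val] (τ p.2)))
    (hper : ∀ i, (⇑φ)^[k] (τ i) = τ i)
    (i j : Fin r) (m : ℕ) :
    ∑ ℓ : Fin k, M (τ i) ((⇑φ)^[ℓ.val] (τ j)) =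
      ∑ t ∈ Finset.image (fun ℓ : Fin k => (⇑φ)^[ℓ.val] (τ j)) univ,
        M ((⇑φ)^[m] (τ i)) t := by
  have horbit_inj : Injective (fun ℓ : Fin k => (⇑φ)^[ℓ.val] (τ j)) :=
    horb.injective.comp (Prod.mk_left_injective j)
  have hperiodic : Periodic (fun ℓ => M ((⇑φ)^[m] (τ i)) ((⇑φ)^[ℓ] (τ j))) k :=
    (IsPeriodicPt.periodic_iterate (hper j)).comp _
  rw [sum_image fun a _ b _ h => horbit_inj h,
    Fin.sum_univ_eq_sum_range (fun ℓ => M (τ i) ((⇑φ)^[ℓ] (τ j))),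
    Fin.sum_univ_eq_sum_range (fun ℓ => M ((⇑φ)^[m] (τ i)) ((⇑φ)^[ℓ] (τ j))),
    ← hperiodic.sum_range_add m]
  simp only [iterate_add_apply, apply_iterate_iterate hM]

/-- In the setting of the uniform equitable decomposition, the matrix
`B₀ = ∑ ℓ, M[𝒯₀, 𝒯_ℓ]` is the divisor matrix of the equitable partition given by
the orbits of `φ`: its `(i,j)` entry equals `∑_{t ∈ V_j} M s t` for any vertex `s`
in the orbit `V_i` of `τ i`, where `V_j` is the orbit of `τ j`. -/
theorem B0_eq_divisor_matrix
    {n k r : ℕ} (hk : 0 < k)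
    (φ : Equiv.Perm (Fin n))
    (M : Matrix (Fin n) (Fin n) ℂ)
    (hM : ∀ i j, M (φ i) (φ j) = M i j)
    (τ : Fin r → Fin n)
    (horb : Function.Bijective (fun p : Fin k × Fin r => (⇑φ)^[p.1.val] (τ p.2)))
    (hper : ∀ i, (⇑φ)^[k] (τ i) = τ i)
    (i j : Fin r) (m : ℕ) :
    ∑ ℓ : Fin k, M (τ i) ((⇑φ)^[ℓ.val] (τ j)) =
      ∑ t ∈ Finset.image (fun ℓ : Fin k => (⇑φ)^[ℓ.val] (τ j)) univ,
        M ((⇑φ)^[m] (τ i)) t :=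
  B0_eq_divisor_matrix_general φ M hM τ horb hper i j m
end

section
/- Let M be a symmetric automorphism compatible matrix on a graph G having a uniform automorphism φ of size k > 1, decomposed as B_0, ..., B_{k-1} with B_j = Σ_m ω^{jm} M_m. Then M_{k-j} = (M_j)^T for each j, hence B_{k-j} = (B_j)^T, so σ(B_j) = σ(B_{k-j}) for j = 1,...,k-1. -/
open Matrix Polynomial

lemma my_charpoly_transpose {r : ℕ} (A : Matrix (Fin r) (Fin r) ℂ) :
    Aᵀ.charpoly = A.charpoly := by
  have h : charmatrix Aᵀ = (charmatrix A)ᵀ := by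
    ext i j
    by_cases hij : i = j
    · subst hij; simp [charmatrix_apply]
    · simp [charmatrix_apply, transpose_apply, Matrix.diagonal_apply_ne _ hij,
        Matrix.diagonal_apply_ne _ (Ne.symm hij)]
  rw [Matrix.charpoly, h, Matrix.det_transpose, Matrix.charpoly]

/-- For a symmetric automorphism compatible matrix `M` and a uniform automorphism of
size `k > 1`, the blocks satisfy `M_{k-j} = (M_j)ᵀ`, hence `B_{k-j} = (B_j)ᵀ`, and
therefore `σ(B_j) = σ(B_{k-j})`.  (Indices live in `Fin k`, where `-j` is `k - j`
taken mod `k`.) -/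
theorem symmetric_blocks_transpose
    {n k r : ℕ} (hk : 1 < k)
    (φ : Equiv.Perm (Fin n))
    (M : Matrix (Fin n) (Fin n) ℂ)
    (hM : ∀ i j, M (φ i) (φ j) = M i j)
    (hsym : Mᵀ = M)
    (τ : Fin r → Fin n)
    (horb : Function.Bijective (fun p : Fin k × Fin r => (⇑φ)^[p.1.val] (τ p.2)))
    (hper : ∀ i, (⇑φ)^[k] (τ i) = τ i)
    (ω : ℂ) (hω : ω = Complex.exp (2 * Real.pi * Complex.I / k))
    (Mblk : Fin k → Matrix (Fin r) (Fin r) ℂ)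
    (hMblk : ∀ (ℓ : Fin k) (i j : Fin r), Mblk ℓ i j = M (τ i) ((⇑φ)^[ℓ.val] (τ j)))
    (B : Fin k → Matrix (Fin r) (Fin r) ℂ)
    (hB : ∀ j : Fin k, B j = ∑ m : Fin k, ω ^ (j.val * m.val) • Mblk m)
    (j : Fin k) :
    Mblk (-j) = (Mblk j)ᵀ ∧ B (-j) = (B j)ᵀ ∧
      (B (-j)).charpoly.roots = (B j).charpoly.roots := by
  haveI : NeZero k := ⟨by omega⟩
  have hk0 : (k : ℂ) ≠ 0 := by exact_mod_cast (by omega : k ≠ 0)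
  -- symmetry of M entries
  have hMsym : ∀ a b, M a b = M b a := by
    intro a b
    conv_lhs => rw [← hsym]
    rw [transpose_apply]
  -- iterated compatibility
  have hMiter : ∀ (m : ℕ) (a b : Fin n), M ((⇑φ)^[m] a) ((⇑φ)^[m] b) = M a b := by
    intro m
    induction m with
    | zero => intro a b; simp
    | succ m ih =>
      intro a b
      rw [Function.iterate_succ_apply', Function.iterate_succ_apply', hM]
      exact ih a b
  -- periodicity of iterates on τ
  have hper' : ∀ (m : ℕ) (i : Fin r), (⇑φ)^[k * m] (τ i) = τ i := by
    intro m
    induction m with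
    | zero => intro i; simp
    | succ m ih =>
      intro i
      rw [Nat.mul_succ, Function.iterate_add_apply, hper, ih]
  -- the neg-val cancellation
  have hcancel : ∀ (ℓ : Fin k) (i : Fin r),
      (⇑φ)^[(-ℓ).val] ((⇑φ)^[ℓ.val] (τ i)) = τ i := by
    intro ℓ i
    rw [← Function.iterate_add_apply]
    have h : ((-ℓ).val + ℓ.val) % k = 0 := by
      have := Fin.val_add (-ℓ) ℓ
      rw [neg_add_cancel] at this
      simpa using this.symm
    obtain ⟨c, hc⟩ := Nat.dvd_of_mod_eq_zero h
    rw [hc, hper']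
  -- part 1 : Mblk (-j) = (Mblk j)ᵀ
  have h1 : Mblk (-j) = (Mblk j)ᵀ := by
    ext i i'
    rw [transpose_apply, hMblk, hMblk]
    calc M (τ i) ((⇑φ)^[(-j).val] (τ i'))
        = M ((⇑φ)^[(-j).val] ((⇑φ)^[j.val] (τ i))) ((⇑φ)^[(-j).val] (τ i')) := by
          rw [hcancel]
      _ = M ((⇑φ)^[j.val] (τ i)) (τ i') := hMiter _ _ _
      _ = M (τ i') ((⇑φ)^[j.val] (τ i)) := hMsym _ _
  -- ω^k = 1
  have hωk : ω ^ k = 1 := by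
    rw [hω, ← Complex.exp_nat_mul, mul_div_cancel₀ _ hk0, Complex.exp_two_pi_mul_I]
  -- ω powers depend only on exponent mod k
  have hmod : ∀ a : ℕ, ω ^ a = ω ^ (a % k) := by
    intro a
    conv_lhs => rw [← Nat.div_add_mod a k]
    rw [pow_add, pow_mul, hωk, one_pow, one_mul]
  have hcast : ∀ a b : ℕ, (a : ZMod k) = (b : ZMod k) → ω ^ a = ω ^ b := by
    intro a b hab
    have : a % k = b % k := (ZMod.natCast_eq_natCast_iff a b k).mp hab
    rw [hmod a, hmod b, this]
  -- cast of neg val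
  have hnegval : ∀ ℓ : Fin k, (((-ℓ : Fin k).val : ℕ) : ZMod k) = -((ℓ.val : ℕ) : ZMod k) := by
    intro ℓ
    have h : ((-ℓ).val + ℓ.val) % k = 0 := by
      have := Fin.val_add (-ℓ) ℓ
      rw [neg_add_cancel] at this
      simpa using this.symm
    have hdvd : (k : ℕ) ∣ ((-ℓ).val + ℓ.val) := Nat.dvd_of_mod_eq_zero h
    have : ((((-ℓ).val + ℓ.val : ℕ)) : ZMod k) = 0 :=
      (ZMod.natCast_eq_zero_iff _ _).mpr hdvd
    push_cast at this
    linear_combination this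
  -- part 2 : B (-j) = (B j)ᵀ
  have h2 : B (-j) = (B j)ᵀ := by
    rw [hB, hB, transpose_sum]
    refine Fintype.sum_equiv (Equiv.neg (Fin k)) _ _ ?_
    intro m
    simp only [Equiv.neg_apply, transpose_smul]
    have hM' : Mblk (-m) = (Mblk m)ᵀ := by
      ext i i'
      rw [transpose_apply, hMblk, hMblk]
      calc M (τ i) ((⇑φ)^[(-m).val] (τ i'))
          = M ((⇑φ)^[(-m).val] ((⇑φ)^[m.val] (τ i))) ((⇑φ)^[(-m).val] (τ i')) := by
            rw [hcancel]
        _ = M ((⇑φ)^[m.val] (τ i)) (τ i') := hMiter _ _ _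
        _ = M (τ i') ((⇑φ)^[m.val] (τ i)) := hMsym _ _
    rw [hM', transpose_transpose]
    congr 1
    apply hcast
    push_cast
    rw [hnegval j, hnegval m]
    ring
  refine ⟨h1, h2, ?_⟩
  rw [h2, my_charpoly_transpose]
end

section
/- Let G be a graph on n vertices with a uniform automorphism φ of size k > 1, and let M be a symmetric automorphism compatible matrix on G. Let r = n/k. If k is odd, M has at most r simple eigenvalues; if k is even, M has at most 2r simple eigenvalues. -/
open Matrix Polynomial Finset

/-!
Let `P` be the operator `v ↦ v ∘ φ` on `ℝⁿ`. It commutes with `M`, and `P ^ k = 1` because every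
vertex is `φ^[p] (τ i)` for some `p` and `i`. A simple eigenvalue of `M` has a one-dimensional
eigenspace (geometric multiplicity is at most algebraic multiplicity); `P` preserves it, so it acts
there by a real `k`-th root of unity: `1`, or `-1` if `k` is even. Eigenvectors of distinct
eigenvalues are independent, so the simple eigenvalues of sign `ε` are at most `dim ker (P - ε)` in
number, and a vector with `v ∘ φ = ε • v` is determined by its values at the `r` representatives
`τ i`.
-/

open Module

namespace Polynomial

variable {R : Type*} [CommRing R] [IsDomain R] [DecidableEq R]

noncomputable def simpleRoots (p : R[X]) : Finset R :=
  p.roots.toFinset.filter (fun μ => p.roots.count μ = 1)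

theorem mem_simpleRoots {p : R[X]} {μ : R} : μ ∈ p.simpleRoots ↔ p.rootMultiplicity μ = 1 := by
  rw [simpleRoots, mem_filter, Multiset.mem_toFinset, count_roots, and_iff_right_iff_imp]
  intro h
  exact Multiset.count_pos.1 (by rw [count_roots]; omega)

end Polynomial

namespace Module.End

section Field

variable {K V : Type*} [Field K] [AddCommGroup V] [Module K V]

theorem finrank_eigenspace_eq_one_of_rootMultiplicity_eq_one [FiniteDimensional K V]
    {f : End K V} {μ : K} (h : f.charpoly.rootMultiplicity μ = 1) :
    finrank K (f.eigenspace μ) = 1 := by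
  refine le_antisymm (h ▸ f.finrank_eigenspace_le μ) ?_
  have hμ : f.HasEigenvalue μ := by
    rw [hasEigenvalue_iff_isRoot_charpoly]
    exact (rootMultiplicity_pos f.charpoly_monic.ne_zero).1 (by omega)
  exact Submodule.one_le_finrank_iff.2 hμ

theorem HasEigenvector.exists_hasEigenvector_of_commute {f g : End K V} {μ : K} {v : V}
    (hv : f.HasEigenvector μ v) (h : finrank K (f.eigenspace μ) = 1) (hfg : Commute f g) :
    ∃ c, g.HasEigenvector c v := by
  have hgv : g v ∈ f.eigenspace μ := f.mapsTo_genEigenspace_of_comm hfg μ 1 hv.1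
  obtain ⟨c, hc⟩ := (finrank_eq_one_iff_of_nonzero' (⟨v, hv.1⟩ : f.eigenspace μ)
    (by simpa using hv.2)).1 h ⟨g v, hgv⟩
  exact ⟨c, mem_eigenspace_iff.2 (by simpa using congrArg Subtype.val hc.symm), hv.2⟩

theorem card_le_finrank_of_hasEigenvector_mem (f : End K V) (W : Submodule K V)
    [FiniteDimensional K W] (S : Finset K) (hS : ∀ μ ∈ S, ∃ v ∈ W, f.HasEigenvector μ v) :
    #S ≤ finrank K W := by
  choose v hvW hv using hS
  have hli : LinearIndependent K (fun μ : S ↦ (⟨v μ μ.2, hvW μ μ.2⟩ : W)) :=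
    .of_comp W.subtype (f.eigenvectors_linearIndependent' (fun μ : S ↦ (μ : K))
      Subtype.coe_injective _ fun μ ↦ hv μ μ.2)
  simpa using hli.fintype_card_le_finrank

end Field

section OrderedField

variable {K V : Type*} [Field K] [LinearOrder K] [IsStrictOrderedRing K]
  [AddCommGroup V] [Module K V] {f g : End K V} {k : ℕ}

theorem HasEigenvector.eq_one_or_eq_neg_one {c : K} {v : V} (hv : g.HasEigenvector c v)
    (hk : k ≠ 0) (hg : g ^ k = 1) : c = 1 ∨ (c = -1 ∧ Even k) := by
  have hck : c ^ k = 1 := by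
    have := hv.pow_apply k
    rw [hg, one_apply] at this
    exact smul_left_injective K hv.2 (this.symm.trans (one_smul K v).symm)
  rcases pow_eq_one_iff_cases.1 hck with h | h | h
  · exact absurd h hk
  · exact .inl h
  · exact .inr h

variable [DecidableEq K] [FiniteDimensional K V]

theorem exists_hasEigenvector_mem_eigenspace_of_mem_simpleRoots (hfg : Commute f g)
    (hk : k ≠ 0) (hg : g ^ k = 1) {μ : K} (hμ : μ ∈ f.charpoly.simpleRoots) :
    ∃ v, f.HasEigenvector μ v ∧ (v ∈ g.eigenspace 1 ∨ (Even k ∧ v ∈ g.eigenspace (-1))) := by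
  have hdim := finrank_eigenspace_eq_one_of_rootMultiplicity_eq_one (mem_simpleRoots.1 hμ)
  obtain ⟨v, hv⟩ := HasEigenvalue.exists_hasEigenvector (f := f) (μ := μ)
    (Submodule.one_le_finrank_iff.1 hdim.ge)
  obtain ⟨c, hc⟩ := hv.exists_hasEigenvector_of_commute hdim hfg
  refine ⟨v, hv, ?_⟩
  rcases hc.eq_one_or_eq_neg_one hk hg with rfl | ⟨rfl, heven⟩
  · exact .inl hc.1
  · exact .inr ⟨heven, hc.1⟩

theorem card_simpleRoots_charpoly_le_of_odd (hfg : Commute f g) (hodd : Odd k)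
    (hg : g ^ k = 1) : #f.charpoly.simpleRoots ≤ finrank K (g.eigenspace 1) := by
  refine f.card_le_finrank_of_hasEigenvector_mem _ _ fun μ hμ ↦ ?_
  obtain ⟨v, hv, h1 | ⟨heven, -⟩⟩ :=
    exists_hasEigenvector_mem_eigenspace_of_mem_simpleRoots hfg hodd.pos.ne' hg hμ
  · exact ⟨v, h1, hv⟩
  · exact absurd heven (Nat.not_even_iff_odd.2 hodd)

theorem card_simpleRoots_charpoly_le (hfg : Commute f g) (hk : k ≠ 0) (hg : g ^ k = 1) :
    #f.charpoly.simpleRoots ≤ finrank K (g.eigenspace 1) + finrank K (g.eigenspace (-1)) := by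
  classical
  set S := f.charpoly.simpleRoots
  calc #S = #(S.filter fun μ ↦ ∃ v ∈ g.eigenspace 1, f.HasEigenvector μ v) +
        #(S.filter fun μ ↦ ¬∃ v ∈ g.eigenspace 1, f.HasEigenvector μ v) :=
        (card_filter_add_card_filter_not _).symm
    _ ≤ _ := by
      gcongr
      · exact f.card_le_finrank_of_hasEigenvector_mem _ _ fun μ hμ ↦ (mem_filter.1 hμ).2
      · refine f.card_le_finrank_of_hasEigenvector_mem _ _ fun μ hμ ↦ ?_
        obtain ⟨hμ, hnot⟩ := mem_filter.1 hμ
        obtain ⟨v, hv, h1 | ⟨-, h2⟩⟩ :=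
          exists_hasEigenvector_mem_eigenspace_of_mem_simpleRoots hfg hk hg hμ
        · exact absurd ⟨v, h1, hv⟩ hnot
        · exact ⟨v, h2, hv⟩

end OrderedField

end Module.End

theorem Function.iterate_eq_id_of_iterate_apply_eq {α ι : Type*} {φ : α → α} {τ : ι → α}
    {k : ℕ} (hτ : ∀ x, ∃ p i, φ^[p] (τ i) = x) (hper : ∀ i, φ^[k] (τ i) = τ i) :
    φ^[k] = id := by
  funext x
  obtain ⟨p, i, rfl⟩ := hτ x
  rw [id, ← Function.iterate_add_apply, add_comm, Function.iterate_add_apply, hper]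

namespace LinearMap

theorem funLeft_pow {R M α : Type*} [Semiring R] [AddCommMonoid M] [Module R M] (φ : α → α)
    (p : ℕ) : funLeft R M φ ^ p = funLeft R M φ^[p] := by
  induction p with
  | zero => rfl
  | succ p ih => rw [pow_succ, ih, Function.iterate_succ', funLeft_comp]; rfl

theorem finrank_eigenspace_funLeft_le {K α ι : Type*} [Field K] [Fintype ι] {φ : α → α}
    {τ : ι → α} (hτ : ∀ x, ∃ p i, φ^[p] (τ i) = x) (e : K) :
    finrank K (Module.End.eigenspace (funLeft K K φ) e) ≤ Fintype.card ι := by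
  set W := Module.End.eigenspace (funLeft K K φ) e
  have hinj : Function.Injective ((funLeft K K τ).comp W.subtype) := by
    rw [← ker_eq_bot, Submodule.eq_bot_iff]
    rintro ⟨v, hv⟩ hvτ
    ext x
    obtain ⟨p, i, rfl⟩ := hτ x
    have hpow : (funLeft K K φ ^ p) v = e ^ p • v := by
      induction p with
      | zero => simp
      | succ p ih => rw [pow_succ', Module.End.mul_apply, ih, map_smul,
          Module.End.mem_eigenspace_iff.1 hv, smul_smul, pow_succ]
    have hvφ := congrFun hpow (τ i)
    rw [funLeft_pow, funLeft_apply] at hvφ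
    have hvi : v (τ i) = 0 := by simpa using congrFun hvτ i
    simp [hvφ, hvi]
  simpa using finrank_le_finrank_of_injective hinj

end LinearMap

theorem Matrix.commute_toLin'_funLeft {n R : Type*} [Fintype n] [DecidableEq n] [CommRing R]
    {M : Matrix n n R} {φ : Equiv.Perm n} (hM : ∀ i j, M (φ i) (φ j) = M i j) :
    Commute (toLin' M) (LinearMap.funLeft R R φ) := by
  have hsub : M.submatrix φ φ = M := Matrix.ext hM
  refine LinearMap.ext fun v ↦ ?_
  change M *ᵥ (v ∘ φ) = (M *ᵥ v) ∘ φ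
  nth_rw 1 [← hsub]
  rw [submatrix_mulVec_equiv, Function.comp_assoc, Equiv.self_comp_symm, Function.comp_id]

theorem uniform_simple_eigenvalue_bound_general
    {n k r : ℕ} (hk : 1 < k)
    (φ : Equiv.Perm (Fin n))
    (M : Matrix (Fin n) (Fin n) ℝ)
    (hM : ∀ i j, M (φ i) (φ j) = M i j)
    (τ : Fin r → Fin n)
    (horb : Function.Bijective (fun p : Fin k × Fin r => (⇑φ)^[p.1.val] (τ p.2)))
    (hper : ∀ i, (⇑φ)^[k] (τ i) = τ i) :
    (Odd k →
      (M.charpoly.roots.toFinset.filter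
        (fun μ => M.charpoly.roots.count μ = 1)).card ≤ r) ∧
    (Even k →
      (M.charpoly.roots.toFinset.filter
        (fun μ => M.charpoly.roots.count μ = 1)).card ≤ 2 * r) := by
  have hτ : ∀ x, ∃ p i, (⇑φ)^[p] (τ i) = x := fun x ↦
    let ⟨⟨p, i⟩, h⟩ := horb.surjective x; ⟨p, i, h⟩
  set g : Module.End ℝ (Fin n → ℝ) := LinearMap.funLeft ℝ ℝ ⇑φ
  have hfg : Commute (toLin' M) g := commute_toLin'_funLeft hM
  have hg : g ^ k = 1 := by
    rw [LinearMap.funLeft_pow, Function.iterate_eq_id_of_iterate_apply_eq hτ hper]; rfl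
  have hW (e : ℝ) : finrank ℝ (g.eigenspace e) ≤ r := by
    simpa using LinearMap.finrank_eigenspace_funLeft_le hτ e
  change (Odd k → #M.charpoly.simpleRoots ≤ r) ∧ (Even k → #M.charpoly.simpleRoots ≤ 2 * r)
  rw [← charpoly_toLin']
  exact ⟨fun hodd ↦ (Module.End.card_simpleRoots_charpoly_le_of_odd hfg hodd hg).trans (hW 1),
    fun _ ↦ (Module.End.card_simpleRoots_charpoly_le hfg (by omega) hg).trans
      (by linarith [hW 1, hW (-1)])⟩

/-- Bound on the number of simple eigenvalues of a real symmetric automorphism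
compatible matrix on a graph with a uniform automorphism of size `k > 1` with
`r = n/k` orbits: at most `r` simple eigenvalues if `k` is odd, and at most `2r`
if `k` is even. -/
theorem uniform_simple_eigenvalue_bound
    {n k r : ℕ} (hk : 1 < k)
    (φ : Equiv.Perm (Fin n))
    (M : Matrix (Fin n) (Fin n) ℝ)
    (hM : ∀ i j, M (φ i) (φ j) = M i j)
    (hsym : Mᵀ = M)
    (τ : Fin r → Fin n)
    (horb : Function.Bijective (fun p : Fin k × Fin r => (⇑φ)^[p.1.val] (τ p.2)))
    (hper : ∀ i, (⇑φ)^[k] (τ i) = τ i) :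
    (Odd k →
      (M.charpoly.roots.toFinset.filter
        (fun μ => M.charpoly.roots.count μ = 1)).card ≤ r) ∧
    (Even k →
      (M.charpoly.roots.toFinset.filter
        (fun μ => M.charpoly.roots.count μ = 1)).card ≤ 2 * r) :=
  uniform_simple_eigenvalue_bound_general hk φ M hM τ horb hper
end

section
/- For k odd and j ∈ {1,...,k−1}, the polynomials p_0(t) = t² − 2t − 1 and p_j(t) = t² − 2cos(2πj/k)t − 1 have no common root; indeed their resultant equals −4(1 − cos(2πj/k))² < 0. Consequently the two roots of p_0 are simple eigenvalues of the adjacency matrix of the k-sun, which therefore has exactly 2 simple eigenvalues, matching the bound r = 2 for the uniform automorphism of size k. -/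
/-!
The adjacency matrix of the `k`-sun is `1 ⊗ [[0,1],[1,0]] + Cₖ ⊗ [[0,0],[0,1]]`, with `Cₖ` the
adjacency matrix of the `k`-cycle. The Vandermonde matrix `V` of a primitive `k`-th root of unity
`ζ` diagonalises `Cₖ` with eigenvalues `ζ^j + ζ^(-j) = 2cos(2πj/k)`, so conjugating by `V ⊗ 1`
shows that the characteristic polynomial is `∏ⱼ pⱼ`, `pⱼ = t² - 2cos(2πj/k) t - 1`.

Each `pⱼ` has discriminant `> 0`, so the multiplicity of `t` is the number of `j` with
`pⱼ(t) = 0`. A root `t` of `pⱼ` determines `2cos(2πj/k) = (t² - 1)/t`, and `pⱼ = p₋ⱼ`; as `k`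
is odd, `-j ≠ j` for `j ≠ 0`, so the multiplicity is `1` exactly when `t` is a root of `p₀`.
-/

open Matrix Polynomial
open Kronecker Finset

noncomputable section

lemma Fin.neg_ne_self_of_odd {k : ℕ} [NeZero k] (hk : Odd k) {i : Fin k} (hi : i ≠ 0) :
    -i ≠ i := by
  intro h
  have hii : ((i + i : Fin k) : ℕ) = 0 := by
    nth_rewrite 1 [← h]
    rw [neg_add_cancel, Fin.val_zero]
  have hpos : 0 < (i : ℕ) := Fin.pos_iff_ne_zero.mpr hi
  obtain ⟨m, rfl⟩ := hk
  rw [Fin.val_add_eq_ite] at hii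
  split_ifs at hii <;> omega

lemma Fin.add_one_ne_sub_one {k : ℕ} [NeZero k] (hk : 3 ≤ k) (i : Fin k) : i + 1 ≠ i - 1 := by
  intro h
  have h2 : ((1 + 1 : Fin k) : ℕ) = 0 := by
    rw [show (1 + 1 : Fin k) = (i + 1) - (i - 1) by abel, h, sub_self, Fin.val_zero]
  rw [Fin.val_add, Fin.val_one', Nat.mod_eq_of_lt (by omega : 1 < k),
    Nat.mod_eq_of_lt (by omega : 1 + 1 < k)] at h2
  omega

lemma pow_val_add_one {M : Type*} [Monoid M] {k : ℕ} [NeZero k] {ζ : M} (hζ : ζ ^ k = 1)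
    (i : Fin k) : ζ ^ ((i + 1 : Fin k) : ℕ) = ζ ^ (i : ℕ) * ζ := by
  rw [← pow_succ, pow_eq_pow_mod ((i : ℕ) + 1) hζ, Fin.val_add, Fin.val_one', Nat.add_mod_mod]

lemma Polynomial.count_roots_prod_of_separable {K ι : Type*} [Field K] [DecidableEq K]
    (s : Finset ι) (q : ι → K[X]) (hq : ∀ i ∈ s, (q i).Separable) (t : K) :
    (∏ i ∈ s, q i).roots.count t = #{i ∈ s | (q i).IsRoot t} := by
  have hne : ∏ i ∈ s, q i ≠ 0 := prod_ne_zero_iff.mpr fun i hi => (hq i hi).ne_zero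
  rw [roots_prod q s hne, Multiset.count_bind, card_filter]
  refine sum_congr rfl fun i hi => ?_
  simp only [Multiset.count_eq_of_nodup (nodup_roots (hq i hi)), mem_roots (hq i hi).ne_zero]

namespace Matrix

variable {R : Type*} [CommRing R]

lemma charpoly_eq_of_mul_eq_mul {n : Type*} [Fintype n] [DecidableEq n] {A B W : Matrix n n R}
    (hW : IsUnit W.det) (h : A * W = W * B) : A.charpoly = B.charpoly := by
  have hB : B = W⁻¹ * A * W := by
    rw [mul_assoc, h, ← mul_assoc, nonsing_inv_mul W hW, one_mul]
  rw [hB]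
  exact (charpoly_units_conj' (W.nonsingInvUnit hW) A).symm

lemma charpoly_blockDiagonal {ι n : Type*} [Fintype ι] [DecidableEq ι] [Fintype n]
    [DecidableEq n] (M : ι → Matrix n n R) :
    (blockDiagonal M).charpoly = ∏ i, (M i).charpoly := by
  have h : charmatrix (blockDiagonal M) = blockDiagonal fun i => charmatrix (M i) := by
    ext ⟨a, i⟩ ⟨b, i'⟩
    by_cases hi : i = i' <;> simp [charmatrix_apply, blockDiagonal_apply, diagonal_apply, hi]
  rw [charpoly, h, det_blockDiagonal]
  rfl

end Matrix

section SunFactor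

variable {R : Type*} [CommRing R]

def sunFactor (c : R) : R[X] := X ^ 2 - C c * X - 1

@[simp]
lemma eval_sunFactor (c t : R) : (sunFactor c).eval t = t ^ 2 - c * t - 1 := by
  simp [sunFactor]

lemma sunFactor_map {S : Type*} [CommRing S] (f : R →+* S) (c : R) :
    (sunFactor c).map f = sunFactor (f c) := by
  simp [sunFactor]

lemma charpoly_sunBlock [Nontrivial R] (c : R) :
    (!![0, 1; 1, c] : Matrix (Fin 2) (Fin 2) R).charpoly = sunFactor c := by
  rw [charpoly_fin_two, trace_fin_two, det_fin_two]
  simp [sunFactor, sub_eq_add_neg]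

lemma det_sylvester_sunFactor (b c : R) :
    (!![1, -b, -1, 0; 0, 1, -b, -1; 1, -c, -1, 0; 0, 1, -c, -1] : Matrix (Fin 4) (Fin 4) R).det =
      -(b - c) ^ 2 := by
  rw [det_succ_row_zero]
  simp [Fin.sum_univ_succ, det_fin_three, Fin.succAbove]
  ring

variable {K : Type*} [Field K]

lemma sunFactor_separable {c : K} (hc : c ^ 2 + 4 ≠ 0) : (sunFactor c).Separable := by
  have hderiv : derivative (sunFactor c) = 2 * X - C c := by
    simp [sunFactor]
    ring
  have hu : C (c ^ 2 + 4)⁻¹ * (C c ^ 2 + 4) = 1 := by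
    rw [← C_pow, ← map_ofNat C 4, ← C_add, ← C_mul, inv_mul_cancel₀ hc, C_1]
  -- `(2X - c)² - 4 (X² - cX - 1) = c² + 4`
  refine (separable_def _).mpr ⟨C (-4 * (c ^ 2 + 4)⁻¹), C (c ^ 2 + 4)⁻¹ * (2 * X - C c), ?_⟩
  rw [hderiv, sunFactor]
  simp only [map_mul, map_neg, map_ofNat]
  linear_combination hu

lemma eq_of_isRoot_sunFactor {c c' t : K} (h : (sunFactor c).IsRoot t)
    (h' : (sunFactor c').IsRoot t) : c = c' := by
  simp only [IsRoot, eval_sunFactor] at h h'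
  have ht : t ≠ 0 := by rintro rfl; simp at h
  exact mul_right_cancel₀ ht (by linear_combination h' - h)

lemma card_roots_toFinset_sunFactor_two : (sunFactor (2 : ℝ)).roots.toFinset.card = 2 := by
  have hsep : (sunFactor (2 : ℝ)).Separable := sunFactor_separable (by norm_num)
  have hfactor : sunFactor (2 : ℝ) = (X - C (1 + √2)) * (X - C (1 - √2)) := by
    have hs : C √2 ^ 2 = (2 : ℝ[X]) := by rw [← C_pow, Real.sq_sqrt zero_le_two, map_ofNat]
    simp only [sunFactor, map_add, map_sub, map_one, map_ofNat]
    linear_combination hs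
  have hne := hsep.ne_zero
  rw [hfactor] at hne
  rw [Multiset.toFinset_card_of_nodup (nodup_roots hsep), hfactor, roots_mul hne,
    roots_X_sub_C, roots_X_sub_C]
  rfl

end SunFactor

section Cycle

def cycleMatrix (k : ℕ) [NeZero k] (R : Type*) [Zero R] [One R] : Matrix (Fin k) (Fin k) R :=
  of fun i i' => if i' = i + 1 ∨ i = i' + 1 then 1 else 0

variable {R : Type*} [CommRing R] {k : ℕ} [NeZero k]

lemma cycleMatrix_map {S : Type*} [CommRing S] (f : R →+* S) :
    (cycleMatrix k R).map f = cycleMatrix k S := by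
  ext i i'
  simp [cycleMatrix, apply_ite f]

lemma cycleMatrix_mul_apply (hk : 3 ≤ k) {n : Type*} (M : Matrix (Fin k) n R) (i : Fin k)
    (j : n) : (cycleMatrix k R * M) i j = M (i + 1) j + M (i - 1) j := by
  have hrow : ∀ l, cycleMatrix k R i l =
      if l ∈ ({i + 1, i - 1} : Finset (Fin k)) then 1 else 0 := by
    intro l
    simp [cycleMatrix, eq_sub_iff_add_eq, eq_comm (a := i)]
  simp only [mul_apply, hrow, ite_mul, one_mul, zero_mul, sum_ite_mem, univ_inter]
  exact sum_pair (Fin.add_one_ne_sub_one hk i)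

lemma cycleMatrix_mul_vandermonde {K : Type*} [Field K] (hk : 3 ≤ k) {ζ : K} (hζ : ζ ^ k = 1) :
    cycleMatrix k K * vandermonde (fun i : Fin k => ζ ^ (i : ℕ)) =
      vandermonde (fun i : Fin k => ζ ^ (i : ℕ)) *
        diagonal (fun j : Fin k => ζ ^ (j : ℕ) + (ζ ^ (j : ℕ))⁻¹) := by
  have hζ0 : ζ ≠ 0 := by rintro rfl; simp [zero_pow (NeZero.ne k)] at hζ
  have hsub : ∀ i : Fin k, ζ ^ ((i - 1 : Fin k) : ℕ) = ζ ^ (i : ℕ) * ζ⁻¹ := fun i => by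
    rw [eq_mul_inv_iff_mul_eq₀ hζ0, ← pow_val_add_one hζ, sub_add_cancel]
  ext i j
  rw [cycleMatrix_mul_apply hk, mul_diagonal, vandermonde_apply, vandermonde_apply,
    vandermonde_apply, pow_val_add_one hζ, hsub, mul_pow, mul_pow, inv_pow, mul_add]

end Cycle

section Sun

variable {R : Type*} [CommRing R] {ι : Type*} [DecidableEq ι]

def sunMatrix (M : Matrix ι ι R) : Matrix (ι × Fin 2) (ι × Fin 2) R :=
  1 ⊗ₖ !![0, 1; 1, 0] + M ⊗ₖ !![0, 0; 0, 1]

lemma sunMatrix_apply (M : Matrix ι ι R) (i i' : ι) (a b : Fin 2) :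
    sunMatrix M (i, a) (i', b) =
      (if i = i' ∧ a ≠ b then 1 else 0) + (if a = 1 ∧ b = 1 then M i i' else 0) := by
  fin_cases a <;> fin_cases b <;> simp [sunMatrix, one_apply]

lemma sunMatrix_map {S : Type*} [CommRing S] (f : R →+* S) (M : Matrix ι ι R) :
    (sunMatrix M).map f = sunMatrix (M.map f) := by
  ext ⟨i, a⟩ ⟨i', b⟩
  simp [sunMatrix_apply, apply_ite f]

lemma sunMatrix_diagonal (d : ι → R) :
    sunMatrix (diagonal d) = reindex (Equiv.prodComm _ _) (Equiv.prodComm _ _)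
      (blockDiagonal fun i => !![0, 1; 1, d i]) := by
  rw [sunMatrix, ← diagonal_one, diagonal_kronecker, diagonal_kronecker]
  ext ⟨i, a⟩ ⟨i', b⟩
  by_cases hi : i = i' <;> fin_cases a <;> fin_cases b <;> simp [blockDiagonal_apply, hi]

lemma sunMatrix_mul_kronecker_one [Fintype ι] {M N V : Matrix ι ι R} (h : M * V = V * N) :
    sunMatrix M * (V ⊗ₖ 1) = (V ⊗ₖ 1) * sunMatrix N := by
  simp only [sunMatrix, add_mul, mul_add, ← mul_kronecker_mul, one_mul, mul_one, h]

lemma charpoly_sunMatrix_of_mul_eq_mul_diagonal [Fintype ι] [Nontrivial R]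
    {M V : Matrix ι ι R} {d : ι → R} (hV : IsUnit V.det) (h : M * V = V * diagonal d) :
    (sunMatrix M).charpoly = ∏ i, sunFactor (d i) := by
  have hW : IsUnit (V ⊗ₖ (1 : Matrix (Fin 2) (Fin 2) R)).det := by
    rw [det_kronecker, det_one, one_pow, mul_one]
    exact hV.pow _
  rw [charpoly_eq_of_mul_eq_mul hW (sunMatrix_mul_kronecker_one h), sunMatrix_diagonal,
    charpoly_reindex, charpoly_blockDiagonal]
  simp_rw [charpoly_sunBlock]

lemma charpoly_sunMatrix_cycleMatrix {K : Type*} [Field K] {k : ℕ} [NeZero k] (hk : 3 ≤ k)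
    {ζ : K} (hζ : IsPrimitiveRoot ζ k) :
    (sunMatrix (cycleMatrix k K)).charpoly =
      ∏ j : Fin k, sunFactor (ζ ^ (j : ℕ) + (ζ ^ (j : ℕ))⁻¹) := by
  refine charpoly_sunMatrix_of_mul_eq_mul_diagonal ?_ (cycleMatrix_mul_vandermonde hk hζ.pow_eq_one)
  rw [isUnit_iff_ne_zero, det_vandermonde_ne_zero_iff]
  exact fun a b hab => Fin.ext (hζ.pow_inj a.is_lt b.is_lt hab)

end Sun

section Spectrum

def cycleEigenvalue (k j : ℕ) : ℝ := 2 * Real.cos (2 * Real.pi * j / k)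

lemma cycleEigenvalue_zero (k : ℕ) : cycleEigenvalue k 0 = 2 := by
  simp [cycleEigenvalue]

lemma cycleEigenvalue_lt_two {k j : ℕ} (hj0 : 0 < j) (hjk : j < k) : cycleEigenvalue k j < 2 := by
  have hj : (0 : ℝ) < j := by exact_mod_cast hj0
  have hk : (0 : ℝ) < k := by exact_mod_cast hj0.trans hjk
  have hx0 : 0 < 2 * Real.pi * j / k := by positivity
  have hx2 : 2 * Real.pi * j / k < 2 * Real.pi := by
    rw [div_lt_iff₀ hk]
    exact mul_lt_mul_of_pos_left (by exact_mod_cast hjk) Real.two_pi_pos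
  have hcos : Real.cos (2 * Real.pi * j / k) ≠ 1 := fun h =>
    hx0.ne' ((Real.cos_eq_one_iff_of_lt_of_lt (by linarith) hx2).mp h)
  have := (Real.cos_le_one _).lt_of_ne hcos
  unfold cycleEigenvalue
  linarith

lemma cycleEigenvalue_neg {k : ℕ} [NeZero k] (j : Fin k) :
    cycleEigenvalue k (-j : Fin k) = cycleEigenvalue k j := by
  rcases eq_or_ne j 0 with rfl | hj
  · rw [neg_zero]
  have hval : ((-j : Fin k) : ℕ) = k - j :=
    (Fin.val_neg' j).trans (Nat.mod_eq_of_lt (by have := Fin.pos_iff_ne_zero.mpr hj; omega))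
  have hk : (k : ℝ) ≠ 0 := NeZero.ne _
  rw [cycleEigenvalue, cycleEigenvalue, hval, Nat.cast_sub j.is_lt.le,
    show 2 * Real.pi * ((k : ℝ) - j) / k = 2 * Real.pi - 2 * Real.pi * j / k by field_simp,
    Real.cos_two_pi_sub]

lemma exp_pow_add_inv_eq_cycleEigenvalue (k j : ℕ) (hk : k ≠ 0) :
    Complex.exp (2 * Real.pi * Complex.I / k) ^ j +
      (Complex.exp (2 * Real.pi * Complex.I / k) ^ j)⁻¹ = cycleEigenvalue k j := by
  rw [← Complex.exp_nat_mul, ← Complex.exp_neg, cycleEigenvalue]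
  push_cast
  rw [Complex.two_cos]
  congr 2 <;> field_simp

lemma charpoly_sunMatrix_cycleMatrix_real {k : ℕ} [NeZero k] (hk : 3 ≤ k) :
    (sunMatrix (cycleMatrix k ℝ)).charpoly = ∏ j : Fin k, sunFactor (cycleEigenvalue k j) := by
  apply map_injective Complex.ofRealHom Complex.ofReal_injective
  rw [← charpoly_map, sunMatrix_map, cycleMatrix_map,
    charpoly_sunMatrix_cycleMatrix hk (Complex.isPrimitiveRoot_exp k (NeZero.ne k)),
    Polynomial.map_prod]
  simp_rw [sunFactor_map, exp_pow_add_inv_eq_cycleEigenvalue k _ (NeZero.ne k)]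
  rfl

lemma count_roots_prod_sunFactor (k : ℕ) [NeZero k] (t : ℝ) :
    (∏ j : Fin k, sunFactor (cycleEigenvalue k j)).roots.count t =
      #{j : Fin k | (sunFactor (cycleEigenvalue k j)).IsRoot t} :=
  count_roots_prod_of_separable _ _ (fun _ _ => sunFactor_separable (by positivity)) t

lemma count_roots_prod_sunFactor_eq_one_iff {k : ℕ} [NeZero k] (hk : Odd k) (t : ℝ) :
    (∏ j : Fin k, sunFactor (cycleEigenvalue k j)).roots.count t = 1 ↔
      (sunFactor (2 : ℝ)).IsRoot t := by
  rw [count_roots_prod_sunFactor, card_eq_one]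
  constructor
  · rintro ⟨j, hj⟩
    have hjmem := hj ▸ mem_singleton_self j
    have hnegmem : -j ∈ ({j} : Finset (Fin k)) := by
      rw [← hj]
      simpa [cycleEigenvalue_neg] using hjmem
    obtain rfl : j = 0 := by
      by_contra hj0
      exact Fin.neg_ne_self_of_odd hk hj0 (mem_singleton.mp hnegmem)
    simpa [cycleEigenvalue_zero] using hjmem
  · intro ht
    refine ⟨0, eq_singleton_iff_unique_mem.mpr ⟨by simpa [cycleEigenvalue_zero] using ht, ?_⟩⟩
    intro j hj
    by_contra hj0
    exact (cycleEigenvalue_lt_two (Fin.pos_iff_ne_zero.mpr hj0) j.is_lt).ne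
      (eq_of_isRoot_sunFactor (mem_filter.mp hj).2 ht)

end Spectrum

/-- For `k` odd and `1 ≤ j ≤ k-1`, the polynomials `p₀ = t² - 2t - 1` and
`p_j = t² - 2cos(2πj/k)t - 1` have resultant (Sylvester determinant)
`-4(1 - cos(2πj/k))² < 0`, hence no common root.  Consequently the two roots of
`p₀` are simple eigenvalues of the adjacency matrix of the `k`-sun, which has
exactly `2` simple eigenvalues, matching the bound `r = 2`. -/
theorem ksun_exactly_two_simple_eigenvalues
    (k : ℕ) [NeZero k] (hkodd : Odd k) (j : ℕ) (hj0 : 0 < j) (hjk : j < k)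
    (c : ℝ) (hc : c = 2 * Real.cos (2 * Real.pi * j / k))
    (p₀ pj : Polynomial ℝ)
    (hp₀ : p₀ = X ^ 2 - Polynomial.C 2 * X - 1)
    (hpj : pj = X ^ 2 - Polynomial.C c * X - 1)
    (A : Matrix (Fin k × Fin 2) (Fin k × Fin 2) ℝ)
    (hA : ∀ (i i' : Fin k) (a b : Fin 2),
      A (i, a) (i', b) =
        (if i = i' ∧ a ≠ b then 1 else 0) +
        (if a = 1 ∧ b = 1 ∧ (i' = i + 1 ∨ i = i' + 1) then 1 else 0)) :
    (!![1, -2, -1, 0; 0, 1, -2, -1; 1, -c, -1, 0; 0, 1, -c, -1] : Matrix (Fin 4) (Fin 4) ℝ).det =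
        -4 * (1 - Real.cos (2 * Real.pi * j / k)) ^ 2 ∧
    -4 * (1 - Real.cos (2 * Real.pi * j / k)) ^ 2 < 0 ∧
    (∀ t : ℝ, ¬(p₀.eval t = 0 ∧ pj.eval t = 0)) ∧
    (∀ t : ℝ, p₀.eval t = 0 → A.charpoly.roots.count t = 1) ∧
    (A.charpoly.roots.toFinset.filter
      (fun μ => A.charpoly.roots.count μ = 1)).card = 2 := by
  have hk3 : 3 ≤ k := by obtain ⟨m, rfl⟩ := hkodd; omega
  have hsun : A = sunMatrix (cycleMatrix k ℝ) := by
    ext ⟨i, a⟩ ⟨i', b⟩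
    simp [hA, sunMatrix_apply, cycleMatrix, ite_and]
  have hsimple := count_roots_prod_sunFactor_eq_one_iff hkodd
  rw [← charpoly_sunMatrix_cycleMatrix_real hk3, ← hsun] at hsimple
  have hc2 : c < 2 := hc ▸ cycleEigenvalue_lt_two hj0 hjk
  change p₀ = sunFactor 2 at hp₀
  change pj = sunFactor c at hpj
  subst hp₀ hpj
  refine ⟨?_, ?_, fun t ⟨h₀, hj⟩ => hc2.ne (eq_of_isRoot_sunFactor hj h₀),
    fun t ht => (hsimple t).2 ht, ?_⟩
  · rw [det_sylvester_sunFactor, hc]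
    ring
  · have hcos : 0 < 1 - Real.cos (2 * Real.pi * j / k) := by linarith
    linarith [pow_pos hcos 2]
  · have hne : sunFactor (2 : ℝ) ≠ 0 := (sunFactor_separable (by norm_num)).ne_zero
    convert card_roots_toFinset_sunFactor_two using 2
    ext t
    simp only [mem_filter, Multiset.mem_toFinset, mem_roots hne, hsimple t]
    exact ⟨And.right, fun ht => ⟨Multiset.count_pos.mp ((hsimple t).2 ht ▸ one_pos), ht⟩⟩
end
end

section
/- Let G be a graph on n vertices, φ a basic automorphism of size k > 1 with fixed vertex set 𝒯_f of size p, 𝒯_0 a semi-transversal of the k-orbits, and M an automorphism compatible matrix on G. Set F = M[𝒯_f,𝒯_f], H = M[𝒯_f,𝒯_0], L = M[𝒯_0,𝒯_f], M_m = M[𝒯_0,𝒯_m], B_j = Σ_{m=0}^{k-1} ω^{jm} M_m with ω = e^{2πi/k}. Then σ(M) = σ([[F, kH],[L, B_0]]) ∪ σ(B_1) ∪ ... ∪ σ(B_{k-1}) as multisets, and moreover [[F, kH],[L, B_0]] equals the divisor matrix of M for the equitable partition given by the orbits of φ. -/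
open Matrix Polynomial Finset

lemma my_charpoly_conj {ι : Type*} [DecidableEq ι] [Fintype ι] {R : Type*} [CommRing R]
    (A P Q : Matrix ι ι R) (h : P * Q = 1) :
    (Q * A * P).charpoly = A.charpoly := by
  have h2 : Q * P = 1 := mul_eq_one_comm.mp h
  have hc : ∀ X Y : Matrix ι ι R, (X * Y).map (C : R → R[X]) = X.map C * Y.map C := by
    intro X Y
    ext i j
    simp [Matrix.map_apply, Matrix.mul_apply, map_sum]
  have key : charmatrix (Q * A * P) = Q.map C * charmatrix A * P.map C := by
    rw [charmatrix, charmatrix]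
    have hm : (C : R →+* R[X]).mapMatrix (Q * A * P) = Q.map C * A.map C * P.map C := by
      simp only [RingHom.mapMatrix_apply]
      rw [hc, hc]
    rw [hm]
    rw [Matrix.mul_sub, Matrix.sub_mul]
    have comm : (Matrix.scalar ι (X : R[X])) * P.map C = P.map C * Matrix.scalar ι (X : R[X]) :=
      (Matrix.scalar_commute (X : R[X]) (fun r' => Commute.all _ _) (P.map C)).eq
    have e1 : Q.map (C : R → R[X]) * Matrix.scalar ι (X : R[X]) * P.map C
        = Matrix.scalar ι (X : R[X]) := by
      rw [mul_assoc, comm, ← mul_assoc, ← hc, h2]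
      simp
    rw [e1]
    simp only [RingHom.mapMatrix_apply]
  rw [charpoly, key, Matrix.det_mul, Matrix.det_mul, charpoly]
  have hd : (Q.map (C : R → R[X])).det * (P.map C).det = 1 := by
    rw [← Matrix.det_mul, ← hc, h2]
    simp
  rw [mul_right_comm, hd, one_mul]

lemma my_charpoly_blockDiagonal {o m : Type*} [DecidableEq o] [Fintype o] [DecidableEq m]
    [Fintype m] {R : Type*} [CommRing R] (f : o → Matrix m m R) :
    (Matrix.blockDiagonal f).charpoly = ∏ i, (f i).charpoly := by
  have key : charmatrix (Matrix.blockDiagonal f)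
      = Matrix.blockDiagonal (fun i => charmatrix (f i)) := by
    ext ⟨i, a⟩ ⟨j, b⟩
    by_cases h : (i, a) = (j, b)
    · cases h; simp [Matrix.blockDiagonal_apply, charmatrix_apply, Matrix.diagonal_apply]
    · simp only [charmatrix_apply, Matrix.blockDiagonal_apply, Matrix.diagonal_apply]
      by_cases hab : a = b
      · subst hab
        have hij : i ≠ j := fun hh => h (by simp [hh])
        simp [hij, Prod.ext_iff, charmatrix_apply, Matrix.diagonal_apply]
      · simp [hab, Prod.ext_iff, h, charmatrix_apply, Matrix.diagonal_apply]
  rw [charpoly, key, Matrix.det_blockDiagonal]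
  rfl

lemma my_geomsum {k : ℕ} (hk : 0 < k) (x : ℂ) (hx : x ^ k = 1) :
    ∑ m : Fin k, x ^ (m.val) = if x = 1 then (k : ℂ) else 0 := by
  rw [Fin.sum_univ_eq_sum_range]
  split_ifs with h
  · simp [h]
  · rw [geom_sum_eq h, hx]
    simp

lemma my_roots_prod {ι : Type*} (s : Finset ι) (f : ι → Polynomial ℂ)
    (hf : ∀ i ∈ s, f i ≠ 0) : (∏ i ∈ s, f i).roots = ∑ i ∈ s, (f i).roots := by
  induction s using Finset.cons_induction with
  | empty => simp
  | cons a s ha ih =>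
    rw [Finset.prod_cons, Finset.sum_cons,
      Polynomial.roots_mul (mul_ne_zero (hf a (Finset.mem_cons_self a s))
        (Finset.prod_ne_zero_iff.mpr (fun i hi => hf i (Finset.mem_cons_of_mem hi)))),
      ih (fun i hi => hf i (Finset.mem_cons_of_mem hi))]

/-- Basic equitable decomposition: `φ` is a basic automorphism of size `k > 1`
(all orbits of size `1` or `k`), with fixed vertices enumerated by `τf : Fin p → Fin n`
and a semi-transversal `τ : Fin r → Fin n` of the `k`-orbits, and `M` is
automorphism compatible.  Then the spectrum of `M` is the union of the spectra of
`B̃ = [[F, kH],[L, B₀]]` and `B₁, ..., B_{k-1}`; moreover `B̃` is the divisor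
matrix of the equitable partition given by the orbits of `φ`. -/
theorem basic_equitable_decomposition
    {n k p r : ℕ} (hk : 1 < k)
    (φ : Equiv.Perm (Fin n))
    (M : Matrix (Fin n) (Fin n) ℂ)
    (hM : ∀ i j, M (φ i) (φ j) = M i j)
    (τf : Fin p → Fin n) (hτf : ∀ a, φ (τf a) = τf a)
    (τ : Fin r → Fin n) (hper : ∀ i, (⇑φ)^[k] (τ i) = τ i)
    (hbij : Function.Bijective
      (Sum.elim τf (fun q : Fin k × Fin r => (⇑φ)^[q.1.val] (τ q.2)) :
        Fin p ⊕ Fin k × Fin r → Fin n))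
    (ω : ℂ) (hω : ω = Complex.exp (2 * Real.pi * Complex.I / k))
    (F : Matrix (Fin p) (Fin p) ℂ) (hF : ∀ a b, F a b = M (τf a) (τf b))
    (H : Matrix (Fin p) (Fin r) ℂ) (hH : ∀ a i, H a i = M (τf a) (τ i))
    (L : Matrix (Fin r) (Fin p) ℂ) (hL : ∀ i a, L i a = M (τ i) (τf a))
    (Mblk : Fin k → Matrix (Fin r) (Fin r) ℂ)
    (hMblk : ∀ (m : Fin k) (i j : Fin r), Mblk m i j = M (τ i) ((⇑φ)^[m.val] (τ j)))
    (B : Fin k → Matrix (Fin r) (Fin r) ℂ)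
    (hB : ∀ jj : Fin k, B jj = ∑ m : Fin k, ω ^ (jj.val * m.val) • Mblk m)
    (Btilde : Matrix (Fin p ⊕ Fin r) (Fin p ⊕ Fin r) ℂ)
    (hBtilde : Btilde = Matrix.fromBlocks F ((k : ℂ) • H) L (B ⟨0, by omega⟩))
    (cls : Fin p ⊕ Fin r → Finset (Fin n))
    (hcls : cls = Sum.elim (fun a => {τf a})
      (fun i => Finset.image (fun ℓ : Fin k => (⇑φ)^[ℓ.val] (τ i)) univ)) :
    M.charpoly.roots =
      Btilde.charpoly.roots +
        ∑ jj ∈ univ.erase (⟨0, by omega⟩ : Fin k), (B jj).charpoly.roots ∧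
    (∀ (x y : Fin p ⊕ Fin r) (s : Fin n), s ∈ cls x →
      Btilde x y = ∑ t ∈ cls y, M s t) := by
  haveI : NeZero k := ⟨by omega⟩
  have kpos : 0 < k := by omega
  have h00 : ∀ (h : 0 < k), (⟨0, h⟩ : Fin k) = (0 : Fin k) := fun h => Fin.ext (by simp)
  -- basic iteration facts
  have hfix : ∀ (m : ℕ) (a : Fin p), (⇑φ)^[m] (τf a) = τf a :=
    fun m a => Function.iterate_fixed (hτf a) m
  have hMit : ∀ (m : ℕ) (i j : Fin n), M ((⇑φ)^[m] i) ((⇑φ)^[m] j) = M i j := by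
    intro m
    induction m with
    | zero => simp
    | succ m ih =>
      intro i j
      simp only [Function.iterate_succ_apply']
      rw [hM, ih]
  have hmod : ∀ (q : ℕ) (i : Fin r), (⇑φ)^[q] (τ i) = (⇑φ)^[q % k] (τ i) := by
    intro q i
    conv_lhs => rw [← Nat.mod_add_div q k]
    rw [Function.iterate_add_apply, Function.iterate_mul]
    rw [Function.iterate_fixed (hper i) (q / k)]
  have hent : ∀ (m m' : Fin k) (i j : Fin r),
      M ((⇑φ)^[m.val] (τ i)) ((⇑φ)^[m'.val] (τ j)) = Mblk (m' - m) i j := by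
    intro m m' i j
    rw [hMblk]
    rw [← hMit (k - m.val) ((⇑φ)^[m.val] (τ i)) ((⇑φ)^[m'.val] (τ j))]
    rw [← Function.iterate_add_apply, ← Function.iterate_add_apply]
    have h1 : k - m.val + m.val = k := by omega
    rw [h1, hper i, hmod (k - m.val + m'.val) j]
    have hv : (m' - m).val = (k - m.val + m'.val) % k := by
      rw [Fin.sub_def]
    rw [hv]
  -- ω facts
  have hk0 : (k : ℂ) ≠ 0 := Nat.cast_ne_zero.mpr (by omega)
  have hprim : IsPrimitiveRoot ω k := by
    rw [hω]
    exact Complex.isPrimitiveRoot_exp k (by omega)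
  have hωk : ω ^ k = 1 := hprim.pow_eq_one
  have hω0 : ω ≠ 0 := by
    intro h
    rw [h, zero_pow (by omega : k ≠ 0)] at hωk
    exact zero_ne_one hωk
  have hωmod : ∀ a : ℕ, ω ^ (a % k) = ω ^ a := by
    intro a
    conv_rhs => rw [← Nat.mod_add_div a k]
    rw [pow_add, pow_mul, hωk, one_pow, mul_one]
  have hsum0 : ∀ t : Fin k, ∑ m : Fin k, ω ^ (m.val * t.val)
      = if t = 0 then (k : ℂ) else 0 := by
    intro t
    have hterm : ∀ m : Fin k, ω ^ (m.val * t.val) = (ω ^ t.val) ^ m.val := by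
      intro m; rw [← pow_mul, Nat.mul_comm]
    rw [Finset.sum_congr rfl fun m _ => hterm m]
    rw [my_geomsum kpos _ (by rw [← pow_mul, Nat.mul_comm, pow_mul, hωk, one_pow])]
    by_cases ht : t = 0
    · subst ht; simp
    · have hne : ω ^ t.val ≠ 1 := by
        intro hh
        have hdvd := (hprim.pow_eq_one_iff_dvd t.val).mp hh
        have := Nat.eq_zero_of_dvd_of_lt hdvd t.isLt
        · exact ht (Fin.ext (by simpa using this))
      rw [if_neg hne, if_neg ht]
  have hsum2 : ∀ m m' : Fin k,
      ∑ j : Fin k, ω ^ (m.val * j.val) * (ω ^ (j.val * m'.val))⁻¹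
        = if m = m' then (k : ℂ) else 0 := by
    intro m m'
    set x : ℂ := ω ^ m.val * (ω ^ m'.val)⁻¹ with hxdef
    have hterm : ∀ j : Fin k, ω ^ (m.val * j.val) * (ω ^ (j.val * m'.val))⁻¹ = x ^ j.val := by
      intro j
      rw [hxdef, mul_pow, inv_pow, ← pow_mul, ← pow_mul, Nat.mul_comm j.val m'.val]
    rw [Finset.sum_congr rfl fun j _ => hterm j]
    have hx : x ^ k = 1 := by
      rw [hxdef, mul_pow, inv_pow, ← pow_mul, ← pow_mul, Nat.mul_comm m.val k,
        Nat.mul_comm m'.val k, pow_mul, pow_mul, hωk, one_pow, one_pow]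
      simp
    rw [my_geomsum kpos x hx]
    have hiff : x = 1 ↔ m = m' := by
      rw [hxdef, mul_inv_eq_one₀ (pow_ne_zero _ hω0)]
      constructor
      · intro hh
        exact Fin.ext (hprim.pow_inj m.isLt m'.isLt hh)
      · intro hh; rw [hh]
    by_cases hmm : m = m'
    · rw [if_pos (hiff.mpr hmm), if_pos hmm]
    · rw [if_neg (fun hh => hmm (hiff.mp hh)), if_neg hmm]
  -- block matrices
  set e : (Fin p ⊕ Fin k × Fin r) ≃ Fin n := Equiv.ofBijective _ hbij with he
  set H' : Matrix (Fin p) (Fin k × Fin r) ℂ := Matrix.of fun a q => H a q.2 with hH'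
  set L' : Matrix (Fin k × Fin r) (Fin p) ℂ := Matrix.of fun q b => L q.2 b with hL'
  set Mc : Matrix (Fin k × Fin r) (Fin k × Fin r) ℂ :=
    Matrix.of (fun q q' => Mblk (q'.1 - q.1) q.2 q'.2) with hMc
  set Pk : Matrix (Fin k × Fin r) (Fin k × Fin r) ℂ :=
    Matrix.of (fun q q' => if q.2 = q'.2 then ω ^ (q.1.val * q'.1.val) else 0) with hPk
  set Qk : Matrix (Fin k × Fin r) (Fin k × Fin r) ℂ :=
    Matrix.of (fun q q' => if q.2 = q'.2 then (k : ℂ)⁻¹ * (ω ^ (q.1.val * q'.1.val))⁻¹ else 0)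
    with hQk
  set Hd : Matrix (Fin p) (Fin k × Fin r) ℂ :=
    Matrix.of (fun a q => if q.1 = 0 then (k : ℂ) * H a q.2 else 0) with hHd
  set Ld : Matrix (Fin k × Fin r) (Fin p) ℂ :=
    Matrix.of (fun q b => if q.1 = 0 then L q.2 b else 0) with hLd
  set Bd : Matrix (Fin k × Fin r) (Fin k × Fin r) ℂ :=
    Matrix.of (fun q q' => if q.1 = q'.1 then B q.1 q.2 q'.2 else 0) with hBd
  -- M in block form
  have h1 : M.submatrix ⇑e ⇑e = fromBlocks F H' L' Mc := by
    ext x y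
    have he' : ∀ z, e z = Sum.elim τf (fun q : Fin k × Fin r => (⇑φ)^[q.1.val] (τ q.2)) z :=
      fun z => rfl
    cases x with
    | inl a =>
      cases y with
      | inl b => simp [he', hF]
      | inr q =>
        simp only [Matrix.submatrix_apply, he', Sum.elim_inl, Sum.elim_inr,
          fromBlocks_apply₁₂, hH', Matrix.of_apply]
        conv_lhs => rw [← hfix q.1.val a]
        rw [hMit, ← hH]
    | inr q =>
      cases y with
      | inl b =>
        simp only [Matrix.submatrix_apply, he', Sum.elim_inl, Sum.elim_inr,
          fromBlocks_apply₂₁, hL', Matrix.of_apply]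
        conv_lhs => rw [← hfix q.1.val b]
        rw [hMit, ← hL]
      | inr q' =>
        simp only [Matrix.submatrix_apply, he', Sum.elim_inr,
          fromBlocks_apply₂₂, hMc, Matrix.of_apply]
        exact hent q.1 q'.1 q.2 q'.2
  have h2 : M.charpoly = (fromBlocks F H' L' Mc).charpoly := by
    rw [← Matrix.charpoly_reindex e.symm M, Matrix.reindex_apply, Equiv.symm_symm, h1]
  -- the key multiplication identities
  have hPkQk : Pk * Qk = 1 := by
    ext ⟨m, i⟩ ⟨m', i'⟩
    rw [Matrix.mul_apply, Fintype.sum_prod_type]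
    simp only [hPk, hQk, Matrix.of_apply, ite_mul, mul_ite, zero_mul, mul_zero,
      Finset.sum_ite_eq, Finset.sum_ite_eq', Finset.mem_univ, if_true, ite_true]
    by_cases hii : i = i'
    · subst hii
      rw [Finset.sum_congr rfl fun x _ => if_pos rfl]
      have : ∀ j : Fin k, ω ^ (m.val * j.val) * ((k:ℂ)⁻¹ * (ω ^ (j.val * m'.val))⁻¹)
          = (k:ℂ)⁻¹ * (ω ^ (m.val * j.val) * (ω ^ (j.val * m'.val))⁻¹) := by
        intro j; ring
      rw [Finset.sum_congr rfl fun j _ => this j, ← Finset.mul_sum, hsum2]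
      by_cases hmm : m = m'
      · subst hmm
        simp [Matrix.one_apply, inv_mul_cancel₀ hk0]
      · simp [Matrix.one_apply, hmm, Prod.ext_iff]
    · simp [Matrix.one_apply, hii, Prod.ext_iff]
  have hHP : H' * Pk = Hd := by
    ext a ⟨j, i'⟩
    rw [Matrix.mul_apply, Fintype.sum_prod_type]
    simp only [hH', hPk, Matrix.of_apply, mul_ite, mul_zero, Finset.sum_ite_eq,
      Finset.sum_ite_eq', Finset.mem_univ, if_true, ite_true]
    rw [Finset.sum_congr rfl (fun m _ => mul_comm (H a i') (ω ^ (m.val * j.val))),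
      ← Finset.sum_mul, hsum0, hHd]
    by_cases hj : j = 0
    · simp [hj, mul_comm]
    · simp [hj]
  have hPL : Pk * Ld = L' := by
    ext ⟨m, i⟩ b
    rw [Matrix.mul_apply, Fintype.sum_prod_type]
    simp only [hPk, hLd, hL', Matrix.of_apply, ite_mul, mul_ite, zero_mul, mul_zero,
      Finset.sum_ite_eq, Finset.sum_ite_eq', Finset.mem_univ, if_true, ite_true]
    simp
  have hMP : Mc * Pk = Pk * Bd := by
    ext ⟨m, i⟩ ⟨j, i'⟩
    rw [Matrix.mul_apply, Matrix.mul_apply, Fintype.sum_prod_type, Fintype.sum_prod_type]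
    simp only [hMc, hPk, hBd, Matrix.of_apply, ite_mul, mul_ite, zero_mul, mul_zero,
      Finset.sum_ite_eq, Finset.sum_ite_eq', Finset.mem_univ, if_true, ite_true]
    have hrhs2 : (∑ x : Fin k, ∑ x_1 : Fin r,
        if x = j then if i = x_1 then ω ^ (m.val * x.val) * B x x_1 i' else 0 else 0)
        = ω ^ (m.val * j.val) * B j i i' := by
      simp [Finset.sum_ite_eq, Finset.sum_ite_eq']
    rw [hrhs2]
    have hL1 : ∀ t : Fin k, Mblk (t + m - m) i i' * ω ^ (((t + m) : Fin k).val * j.val)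
        = Mblk t i i' * (ω ^ (t.val * j.val) * ω ^ (m.val * j.val)) := by
      intro t
      rw [add_sub_cancel_right]
      congr 1
      have h1 : ((t + m) : Fin k).val = (t.val + m.val) % k := by
        rw [Fin.add_def]
      rw [h1, pow_mul, hωmod, ← pow_mul, Nat.add_mul, pow_add]
    rw [← Equiv.sum_comp (Equiv.addRight m)
      (fun x : Fin k => Mblk (x - m) i i' * ω ^ (x.val * j.val))]
    simp only [Equiv.coe_addRight]
    rw [Finset.sum_congr rfl fun t _ => hL1 t]
    rw [hB]
    simp only [Matrix.sum_apply, Matrix.smul_apply, smul_eq_mul]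
    rw [Finset.mul_sum]
    refine Finset.sum_congr rfl fun t _ => ?_
    rw [Nat.mul_comm j.val t.val]
    ring
  -- assemble full conjugation
  set A : Matrix (Fin p ⊕ Fin k × Fin r) (Fin p ⊕ Fin k × Fin r) ℂ :=
    fromBlocks F H' L' Mc with hA
  set P : Matrix (Fin p ⊕ Fin k × Fin r) (Fin p ⊕ Fin k × Fin r) ℂ :=
    fromBlocks 1 0 0 Pk with hP
  set Q : Matrix (Fin p ⊕ Fin k × Fin r) (Fin p ⊕ Fin k × Fin r) ℂ :=
    fromBlocks 1 0 0 Qk with hQ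
  set D : Matrix (Fin p ⊕ Fin k × Fin r) (Fin p ⊕ Fin k × Fin r) ℂ :=
    fromBlocks F Hd Ld Bd with hD
  have hPQ : P * Q = 1 := by
    rw [hP, hQ, Matrix.fromBlocks_multiply]
    simp [hPkQk, Matrix.fromBlocks_one]
  have hQP : Q * P = 1 := mul_eq_one_comm.mp hPQ
  have hAP : A * P = P * D := by
    rw [hA, hP, hD, Matrix.fromBlocks_multiply, Matrix.fromBlocks_multiply]
    rw [hHP, hPL, hMP]
    simp
  have hQAP : Q * A * P = D := by
    rw [mul_assoc, hAP, ← mul_assoc, hQP, one_mul]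
  have h3 : M.charpoly = D.charpoly := by
    rw [h2, ← hQAP]
    exact (my_charpoly_conj A P Q hPQ).symm
  -- reindex D to block-diagonal form
  set g : ((Fin p ⊕ Fin r) ⊕ (Fin r × {j : Fin k // j ≠ 0})) ≃ (Fin p ⊕ Fin k × Fin r) :=
    { toFun := fun x => match x with
        | .inl (.inl a) => .inl a
        | .inl (.inr i) => .inr (0, i)
        | .inr (i, j) => .inr (j.1, i)
      invFun := fun x => match x with
        | .inl a => .inl (.inl a)
        | .inr q => if h : q.1 = 0 then .inl (.inr q.2) else .inr (q.2, ⟨q.1, h⟩)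
      left_inv := by
        rintro ((a | i) | ⟨i, ⟨j, hj⟩⟩)
        · rfl
        · simp
        · simp [hj]
      right_inv := by
        rintro (a | ⟨j, i⟩)
        · rfl
        · by_cases hj : j = 0
          · subst hj; simp
          · simp [hj] } with hg
  set Bsub : Matrix (Fin r × {j : Fin k // j ≠ 0}) (Fin r × {j : Fin k // j ≠ 0}) ℂ :=
    Matrix.blockDiagonal (fun j : {j : Fin k // j ≠ 0} => B j.1) with hBsub
  have hDsub : D.submatrix ⇑g ⇑g = fromBlocks Btilde 0 0 Bsub := by
    ext x y
    rcases x with (a | i) | ⟨i, jx⟩ <;> rcases y with (b | i') | ⟨i', jy⟩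
    · simp only [Matrix.submatrix_apply, hg, Equiv.coe_fn_mk, hD, hBtilde, hBsub,
          fromBlocks_apply₁₁, fromBlocks_apply₁₂, fromBlocks_apply₂₁, fromBlocks_apply₂₂,
          hHd, hLd, hBd, Matrix.of_apply, Matrix.blockDiagonal_apply,
          Matrix.smul_apply, smul_eq_mul, Matrix.zero_apply]
      try rfl
    · simp only [Matrix.submatrix_apply, hg, Equiv.coe_fn_mk, hD, hBtilde, hBsub,
          fromBlocks_apply₁₁, fromBlocks_apply₁₂, fromBlocks_apply₂₁, fromBlocks_apply₂₂,
          hHd, hLd, hBd, Matrix.of_apply, Matrix.blockDiagonal_apply,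
          Matrix.smul_apply, smul_eq_mul, Matrix.zero_apply]
      try rfl
    · simp only [Matrix.submatrix_apply, hg, Equiv.coe_fn_mk, hD, hBtilde, hBsub,
          fromBlocks_apply₁₁, fromBlocks_apply₁₂, fromBlocks_apply₂₁, fromBlocks_apply₂₂,
          hHd, hLd, hBd, Matrix.of_apply, Matrix.blockDiagonal_apply,
          Matrix.smul_apply, smul_eq_mul, Matrix.zero_apply]
      rw [if_neg jy.2]
    · simp only [Matrix.submatrix_apply, hg, Equiv.coe_fn_mk, hD, hBtilde, hBsub,
          fromBlocks_apply₁₁, fromBlocks_apply₁₂, fromBlocks_apply₂₁, fromBlocks_apply₂₂,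
          hHd, hLd, hBd, Matrix.of_apply, Matrix.blockDiagonal_apply,
          Matrix.smul_apply, smul_eq_mul, Matrix.zero_apply]
      rw [if_pos trivial]
    · simp only [Matrix.submatrix_apply, hg, Equiv.coe_fn_mk, hD, hBtilde, hBsub,
          fromBlocks_apply₁₁, fromBlocks_apply₁₂, fromBlocks_apply₂₁, fromBlocks_apply₂₂,
          hHd, hLd, hBd, Matrix.of_apply, Matrix.blockDiagonal_apply,
          Matrix.smul_apply, smul_eq_mul, Matrix.zero_apply]
      rw [if_pos trivial, h00]
    · simp only [Matrix.submatrix_apply, hg, Equiv.coe_fn_mk, hD, hBtilde, hBsub,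
          fromBlocks_apply₁₁, fromBlocks_apply₁₂, fromBlocks_apply₂₁, fromBlocks_apply₂₂,
          hHd, hLd, hBd, Matrix.of_apply, Matrix.blockDiagonal_apply,
          Matrix.smul_apply, smul_eq_mul, Matrix.zero_apply]
      rw [if_neg (fun h => jy.2 h.symm)]
    · simp only [Matrix.submatrix_apply, hg, Equiv.coe_fn_mk, hD, hBtilde, hBsub,
          fromBlocks_apply₁₁, fromBlocks_apply₁₂, fromBlocks_apply₂₁, fromBlocks_apply₂₂,
          hHd, hLd, hBd, Matrix.of_apply, Matrix.blockDiagonal_apply,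
          Matrix.smul_apply, smul_eq_mul, Matrix.zero_apply]
      rw [if_neg jx.2]
    · simp only [Matrix.submatrix_apply, hg, Equiv.coe_fn_mk, hD, hBtilde, hBsub,
          fromBlocks_apply₁₁, fromBlocks_apply₁₂, fromBlocks_apply₂₁, fromBlocks_apply₂₂,
          hHd, hLd, hBd, Matrix.of_apply, Matrix.blockDiagonal_apply,
          Matrix.smul_apply, smul_eq_mul, Matrix.zero_apply]
      rw [if_neg jx.2]
    · simp only [Matrix.submatrix_apply, hg, Equiv.coe_fn_mk, hD, hBtilde, hBsub,
          fromBlocks_apply₁₁, fromBlocks_apply₁₂, fromBlocks_apply₂₁, fromBlocks_apply₂₂,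
          hHd, hLd, hBd, Matrix.of_apply, Matrix.blockDiagonal_apply,
          Matrix.smul_apply, smul_eq_mul, Matrix.zero_apply]
      by_cases hxy : jx = jy
      · subst hxy
        simp
      · have h5 : (jx : Fin k) ≠ (jy : Fin k) := fun hh => hxy (Subtype.ext hh)
        rw [if_neg h5, if_neg hxy]
  have h4 : D.charpoly = Btilde.charpoly * ∏ j : {j : Fin k // j ≠ 0}, (B j.1).charpoly := by
    rw [← Matrix.charpoly_reindex g.symm D, Matrix.reindex_apply, Equiv.symm_symm, hDsub,
      Matrix.charpoly_fromBlocks_zero₂₁, hBsub, my_charpoly_blockDiagonal]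
  have hprodconv : ∏ j : {j : Fin k // j ≠ 0}, (B j.1).charpoly
      = ∏ jj ∈ univ.erase (0 : Fin k), (B jj).charpoly :=
    (Finset.prod_subtype (univ.erase (0 : Fin k))
      (fun x => by simp [Finset.mem_erase]) (fun jj => (B jj).charpoly)).symm
  constructor
  · rw [h3, h4, hprodconv, h00]
    have hne : ∀ jj ∈ univ.erase (0 : Fin k), (B jj).charpoly ≠ 0 :=
      fun jj _ => (Matrix.charpoly_monic (B jj)).ne_zero
    rw [Polynomial.roots_mul (mul_ne_zero (Matrix.charpoly_monic Btilde).ne_zero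
      (Finset.prod_ne_zero_iff.mpr hne)), my_roots_prod _ _ hne]
  · -- divisor matrix property
    intro x y s hs
    have hinj : ∀ i : Fin r, Function.Injective (fun ℓ : Fin k => (⇑φ)^[ℓ.val] (τ i)) := by
      intro i ℓ ℓ' hh
      have h5 : (Sum.elim τf (fun q : Fin k × Fin r => (⇑φ)^[q.1.val] (τ q.2))
          (Sum.inr (ℓ, i))) = (Sum.elim τf (fun q : Fin k × Fin r => (⇑φ)^[q.1.val] (τ q.2))
          (Sum.inr (ℓ', i))) := hh
      have := hbij.1 h5
      simpa [Prod.ext_iff] using this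
    rcases x with a | i
    · have hsa : s = τf a := by
        rw [hcls] at hs
        simpa using hs
      subst hsa
      rcases y with b | i'
      · rw [hcls, hBtilde]
        simp [hF]
      · rw [hcls, hBtilde]
        simp only [Sum.elim_inr, fromBlocks_apply₁₂, Matrix.smul_apply, smul_eq_mul]
        rw [Finset.sum_image (fun ℓ _ ℓ' _ hh => hinj i' hh)]
        have hterm : ∀ ℓ : Fin k, M (τf a) ((⇑φ)^[ℓ.val] (τ i')) = H a i' := by
          intro ℓ
          conv_lhs => rw [← hfix ℓ.val a]
          rw [hMit, ← hH]
        rw [Finset.sum_congr rfl fun ℓ _ => hterm ℓ]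
        simp [Finset.card_univ, mul_comm]
    · have hsi : ∃ ℓ : Fin k, (⇑φ)^[ℓ.val] (τ i) = s := by
        rw [hcls] at hs
        simpa using hs
      obtain ⟨ℓ, rfl⟩ := hsi
      rcases y with b | i'
      · rw [hcls, hBtilde]
        simp only [Sum.elim_inl, fromBlocks_apply₂₁, Finset.sum_singleton]
        conv_rhs => rw [← hfix ℓ.val b]
        rw [hMit, ← hL]
      · rw [hcls, hBtilde]
        simp only [Sum.elim_inr, fromBlocks_apply₂₂]
        rw [Finset.sum_image (fun m _ m' _ hh => hinj i' hh)]
        rw [Finset.sum_congr rfl fun m _ => hent ℓ m i i']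
        have hsumim : (∑ m : Fin k, Mblk (m - ℓ) i i') = ∑ t : Fin k, Mblk t i i' :=
          Fintype.sum_equiv (Equiv.subRight ℓ) _ _ (fun m => by simp)
        rw [hsumim, h00, hB]
        simp only [Matrix.sum_apply, Matrix.smul_apply, smul_eq_mul]
        refine Finset.sum_congr rfl fun t _ => ?_
        simp
end

section
/- Let k ≥ 2 and let A be the 2k×2k adjacency matrix of the directed ladder graph K with vertices {1,...,2k}, arcs (2i−1, 2i+1) and (2i, 2i+2) indices mod 2k (forming two directed k-cycles on odd and even vertices), together with arcs (2i, 2i−1) from each even vertex to the odd vertex paired with it. Then σ(A) = { ±1 + e^{2πij/k} : j = 0,1,...,k−1 }. In particular, if k is odd all 2k eigenvalues are simple, so a directed graph can have more than 2r = 4 simple eigenvalues despite having a uniform automorphism of size k with r = 2 orbits. -/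
/-!
The ladder matrix is the Kronecker sum `P ⊗ 1 + 1 ⊗ J` of the cyclic shift `P` of order `k` and
the swap `J` of order `2`. The Vandermonde matrix of the powers of a primitive `k`-th root of unity
`ω` diagonalises `P` with eigenvalues `ω ^ j`, and the Hadamard matrix `!![1, 1; 1, -1]`
diagonalises `J` with eigenvalues `±1`; hence their Kronecker product diagonalises the ladder, with
eigenvalues `ω ^ j ± 1`. For odd `k` these are distinct: `1 + ω ^ i = -1 + ω ^ j` would put two
points of the unit circle at distance `2`, forcing `ω ^ i = -1`, which is not a `k`-th root of
unity.
-/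

open Matrix Polynomial

open scoped Kronecker

namespace Matrix

variable {m n R : Type*} [Fintype m] [DecidableEq m] [Fintype n] [DecidableEq n]

theorem charpoly_eq_of_mul_eq_mul_s17 [CommRing R] {A S D : Matrix n n R} (hS : IsUnit S.det)
    (h : A * S = S * D) : A.charpoly = D.charpoly := by
  obtain ⟨U, rfl⟩ := (isUnit_iff_isUnit_det S).mpr hS
  have : A = U.val * D * U.val⁻¹ := by
    rw [← h, mul_assoc, ← coe_units_inv, Units.mul_inv, mul_one]
  rw [this, charpoly_units_conj]

theorem roots_charpoly_diagonal [CommRing R] [IsDomain R] (d : n → R) :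
    (diagonal d).charpoly.roots = Finset.univ.val.map d := by
  rw [charpoly_diagonal, Finset.prod_eq_multiset_prod,
    ← roots_multiset_prod_X_sub_C (Finset.univ.val.map d), Multiset.map_map]
  rfl

theorem kroneckerSum_mul_kronecker [CommRing R] {P F : Matrix m m R} {Q G : Matrix n n R}
    {a : m → R} {b : n → R} (hP : P * F = F * diagonal a) (hQ : Q * G = G * diagonal b) :
    (P ⊗ₖ 1 + 1 ⊗ₖ Q) * (F ⊗ₖ G) = (F ⊗ₖ G) * diagonal fun p => a p.1 + b p.2 := by
  have hdiag : diagonal (fun p : m × n => a p.1 + b p.2) = diagonal a ⊗ₖ 1 + 1 ⊗ₖ diagonal b := by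
    simp only [← diagonal_one, diagonal_kronecker_diagonal, diagonal_add]
    simp
  rw [hdiag, add_mul, mul_add, ← mul_kronecker_mul, ← mul_kronecker_mul, ← mul_kronecker_mul,
    ← mul_kronecker_mul, hP, hQ, Matrix.one_mul, Matrix.mul_one, Matrix.one_mul, Matrix.mul_one]

theorem roots_charpoly_kroneckerSum [Field R] {P F : Matrix m m R} {Q G : Matrix n n R}
    {a : m → R} {b : n → R} (hF : F.det ≠ 0) (hG : G.det ≠ 0)
    (hP : P * F = F * diagonal a) (hQ : Q * G = G * diagonal b) :
    (P ⊗ₖ 1 + 1 ⊗ₖ Q).charpoly.roots = Finset.univ.val.map fun p : m × n => a p.1 + b p.2 := by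
  have hFG : IsUnit (F ⊗ₖ G).det := by
    rw [det_kronecker]; exact (mul_ne_zero (pow_ne_zero _ hF) (pow_ne_zero _ hG)).isUnit
  rw [charpoly_eq_of_mul_eq_mul_s17 hFG (kroneckerSum_mul_kronecker hP hQ), roots_charpoly_diagonal]

end Matrix

def cyclicShift (k : ℕ) [NeZero k] (R : Type*) [Zero R] [One R] : Matrix (Fin k) (Fin k) R :=
  of fun i j => if j = i + 1 then 1 else 0

theorem cyclicShift_mul_vandermonde {R : Type*} [CommRing R] {k : ℕ} [NeZero k] {ζ : R}
    (hζ : ζ ^ k = 1) :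
    cyclicShift k R * vandermonde (fun i : Fin k => ζ ^ (i : ℕ)) =
      vandermonde (fun i : Fin k => ζ ^ (i : ℕ)) * diagonal fun j : Fin k => ζ ^ (j : ℕ) := by
  ext i j
  have hsucc : ζ ^ ((i + 1 : Fin k) : ℕ) = ζ ^ (i : ℕ) * ζ := by
    rw [Fin.val_add, pow_eq_pow_mod _ hζ, Nat.mod_mod, ← pow_eq_pow_mod _ hζ, pow_add,
      Fin.val_one', ← pow_eq_pow_mod _ hζ, pow_one]
  rw [mul_diagonal]
  simp [cyclicShift, mul_apply, hsucc, mul_pow]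

theorem IsPrimitiveRoot.det_vandermonde_ne_zero {R : Type*} [CommRing R] [IsDomain R] {k : ℕ}
    {ζ : R} (hζ : IsPrimitiveRoot ζ k) : (vandermonde fun i : Fin k => ζ ^ (i : ℕ)).det ≠ 0 :=
  det_vandermonde_ne_zero_iff.mpr fun i j h => Fin.ext (hζ.pow_inj i.isLt j.isLt h)

theorem swap_mul_hadamard {R : Type*} [CommRing R] :
    !![0, 1; 1, 0] * !![1, 1; 1, -1] = !![1, 1; 1, -1] * diagonal ![(1 : R), -1] := by
  ext i j; fin_cases i <;> fin_cases j <;> simp [mul_apply, Fin.sum_univ_two]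

theorem det_hadamard {R : Type*} [CommRing R] :
    (!![1, 1; 1, -1] : Matrix (Fin 2) (Fin 2) R).det = -2 := by
  rw [det_fin_two_of]; ring

def directedLadder (k : ℕ) [NeZero k] (R : Type*) [Semiring R] :
    Matrix (Fin k × Fin 2) (Fin k × Fin 2) R :=
  cyclicShift k R ⊗ₖ 1 + 1 ⊗ₖ !![0, 1; 1, 0]

theorem roots_charpoly_directedLadder {R : Type*} [Field R] (h2 : (2 : R) ≠ 0) {k : ℕ} [NeZero k]
    {ζ : R} (hζ : IsPrimitiveRoot ζ k) :
    (directedLadder k R).charpoly.roots =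
      Finset.univ.val.map fun p : Fin k × Fin 2 => ζ ^ (p.1 : ℕ) + ![1, -1] p.2 :=
  roots_charpoly_kroneckerSum hζ.det_vandermonde_ne_zero
    (by rw [det_hadamard]; exact neg_ne_zero.mpr h2) (cyclicShift_mul_vandermonde hζ.pow_eq_one)
    swap_mul_hadamard

theorem Complex.add_two_ne_of_pow_eq_one {k : ℕ} (hk : Odd k) {z w : ℂ} (hz : z ^ k = 1)
    (hw : w ^ k = 1) : z + 2 ≠ w := by
  rintro rfl
  have hz1 := Complex.norm_eq_one_of_pow_eq_one hz hk.pos.ne'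
  have hw1 := Complex.norm_eq_one_of_pow_eq_one hw hk.pos.ne'
  obtain ⟨hre, him⟩ : z.re = -1 ∧ z.im = 0 := by
    have h := congrArg (· ^ 2) hw1
    have h' := congrArg (· ^ 2) hz1
    simp only [Complex.sq_norm, Complex.normSq_apply, Complex.add_re, Complex.add_im,
      Complex.re_ofNat, Complex.im_ofNat, add_zero, one_pow] at h h'
    constructor <;> nlinarith
  rw [show z = -1 from Complex.ext (by simpa) (by simpa), hk.neg_one_pow] at hz
  norm_num at hz

theorem injective_directedLadder_eigenvalues {k : ℕ} (hk : Odd k) {ζ : ℂ}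
    (hζ : IsPrimitiveRoot ζ k) :
    Function.Injective fun p : Fin k × Fin 2 => ζ ^ (p.1 : ℕ) + ![1, -1] p.2 := by
  have hpow_inj : ∀ i j : Fin k, ζ ^ (i : ℕ) = ζ ^ (j : ℕ) → i = j :=
    fun i j h => Fin.ext (hζ.pow_inj i.isLt j.isLt h)
  have hroot : ∀ i : Fin k, (ζ ^ (i : ℕ)) ^ k = 1 := fun i => by
    rw [← pow_mul, mul_comm, pow_mul, hζ.pow_eq_one, one_pow]
  rintro ⟨i, a⟩ ⟨j, b⟩ h
  fin_cases a <;> fin_cases b <;>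
    simp only [Fin.zero_eta, Fin.mk_one, Fin.isValue, cons_val_zero, cons_val_one, cons_val_fin_one,
      add_left_inj] at h
  · exact Prod.ext (hpow_inj i j h) rfl
  · exact absurd (by linear_combination h) (Complex.add_two_ne_of_pow_eq_one hk (hroot i) (hroot j))
  · exact absurd (by linear_combination -h)
      (Complex.add_two_ne_of_pow_eq_one hk (hroot j) (hroot i))
  · exact Prod.ext (hpow_inj i j h) rfl

theorem directed_ladder_spectrum_general
    (k : ℕ) [NeZero k]
    (A : Matrix (Fin k × Fin 2) (Fin k × Fin 2) ℂ)
    (hA : ∀ (i j : Fin k) (a b : Fin 2),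
      A (i, a) (j, b) =
        (if a = b ∧ j = i + 1 then 1 else 0) +
        (if i = j ∧ a ≠ b then 1 else 0))
    (ω : ℂ) (hω : ω = Complex.exp (2 * Real.pi * Complex.I / k)) :
    A.charpoly.roots =
      ∑ j : Fin k, ({1 + ω ^ j.val, -1 + ω ^ j.val} : Multiset ℂ) ∧
    (Odd k → A.charpoly.roots.Nodup) := by
  have hladder : A = directedLadder k ℂ := by
    ext ⟨i, a⟩ ⟨j, b⟩
    rw [hA]
    fin_cases a <;> fin_cases b <;> simp [directedLadder, cyclicShift, one_apply, eq_comm]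
  have hprim : IsPrimitiveRoot ω k := hω ▸ Complex.isPrimitiveRoot_exp k (NeZero.ne k)
  rw [hladder, roots_charpoly_directedLadder two_ne_zero hprim]
  refine ⟨?_, fun hk => Finset.univ.nodup.map (injective_directedLadder_eigenvalues hk hprim)⟩
  rw [← Multiset.sum_map_singleton (Multiset.map _ _), Multiset.map_map]
  change ∑ p : Fin k × Fin 2, ({_} : Multiset ℂ) = _
  rw [Fintype.sum_prod_type]
  simp [Fin.sum_univ_two, add_comm]

/-- The directed ladder graph `K` on `2k` vertices (`k ≥ 2`): vertices `(i, a)`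
with `a = 0` the odd rung and `a = 1` the even rung, arcs forming two directed
`k`-cycles `(i,a) → (i+1,a)` together with the vertical edges joining `(i,0)` and
`(i,1)` within each rung.  Its adjacency matrix `A` has spectrum
`{±1 + e^{2πij/k} : j = 0,...,k-1}`; in particular, if `k` is odd all `2k`
eigenvalues are simple, so a directed graph may have more than `2r = 4` simple
eigenvalues despite admitting a uniform automorphism with `r = 2` orbits. -/
theorem directed_ladder_spectrum
    (k : ℕ) [NeZero k] (hk : 2 ≤ k)
    (A : Matrix (Fin k × Fin 2) (Fin k × Fin 2) ℂ)
    (hA : ∀ (i j : Fin k) (a b : Fin 2),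
      A (i, a) (j, b) =
        (if a = b ∧ j = i + 1 then 1 else 0) +
        (if i = j ∧ a ≠ b then 1 else 0))
    (ω : ℂ) (hω : ω = Complex.exp (2 * Real.pi * Complex.I / k)) :
    A.charpoly.roots =
      ∑ j : Fin k, ({1 + ω ^ j.val, -1 + ω ^ j.val} : Multiset ℂ) ∧
    (Odd k → A.charpoly.roots.Nodup) :=
  directed_ladder_spectrum_general k A hA ω hω
end

section
/- Let n be even, N < n−2 odd, and let T be the tree on n vertices consisting of a path 1—2—...—N with n−N additional leaves all attached to vertex N. Let M be its adjacency matrix. Then rank M = N+1, every nonzero eigenvalue of M is simple, and hence M has exactly N+1 simple eigenvalues. -/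
/-! The broom is the pullback of the path `P_{N+1}` along the surjection `c = broomCollapse N n`
sending every leaf to the vertex `N`, so `M = A(P_{N+1}).submatrix c c`.
Since `N + 1` is even, `A(P_{N+1})` is nonsingular, hence `rank M = N + 1` and `0` is an eigenvalue
of multiplicity `n - N - 1 ≥ 2`. An eigenvector for `μ ≠ 0` satisfies the three-term recurrence
`μ v_k = v_{k-1} + v_{k+1}` along the path, so it is determined by `v_0`, and the leaves carry
`v_{N-1} / μ`; since `M` is symmetric, multiplicity equals the dimension of the eigenspace, so every
nonzero eigenvalue is simple. The `N + 1` simple eigenvalues are therefore exactly the nonzero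
ones. -/

open Matrix Module Module.End SimpleGraph Function

theorem Multiset.card_filter_count_eq_one {α : Type*} [DecidableEq α] (s : Multiset α) (a : α)
    (ha : s.count a ≠ 1) (h : ∀ x ≠ a, s.count x ≤ 1) :
    (s.toFinset.filter (fun x => s.count x = 1)).card = card s - s.count a := by
  have hnodup : (s.filter (· ≠ a)).Nodup := by
    refine Multiset.nodup_iff_count_le_one.mpr fun x => ?_
    rw [Multiset.count_filter]
    split_ifs with hx
    exacts [h x hx, zero_le_one]
  have hsimple : s.toFinset.filter (fun x => s.count x = 1) = (s.filter (· ≠ a)).toFinset := by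
    ext x
    simp only [Finset.mem_filter, Multiset.mem_toFinset, Multiset.mem_filter]
    constructor
    · rintro ⟨hx, hx1⟩
      exact ⟨hx, by rintro rfl; exact ha hx1⟩
    · rintro ⟨hx, hxa⟩
      exact ⟨hx, le_antisymm (h x hxa) (Multiset.count_pos.mpr hx)⟩
  have hsplit := congrArg Multiset.card (Multiset.filter_add_not (· = a) s)
  rw [Multiset.card_add, Multiset.filter_eq', Multiset.card_replicate] at hsplit
  rw [hsimple, Multiset.toFinset_card_of_nodup hnodup, ← hsplit, Nat.add_sub_cancel_left]

namespace Matrix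

theorem submatrix_mulVec_apply {ι κ R : Type*} [Fintype ι] [Fintype κ] [DecidableEq κ]
    [NonUnitalNonAssocSemiring R] (B : Matrix κ κ R) (r c : ι → κ) (v : ι → R) (i : ι) :
    (B.submatrix r c *ᵥ v) i = (B *ᵥ fun k => ∑ j with c j = k, v j) (r i) := by
  simp only [mulVec, dotProduct, submatrix_apply, Finset.mul_sum]
  rw [← Finset.sum_fiberwise Finset.univ c (fun j => B (r i) (c j) * v j)]
  refine Finset.sum_congr rfl fun k _ => Finset.sum_congr rfl fun j hj => ?_
  rw [(Finset.mem_filter.mp hj).2]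

theorem rank_submatrix_of_surjective {ι κ R : Type*} [Fintype ι] [Fintype κ]
    [CommSemiring R] [StrongRankCondition R] (B : Matrix κ κ R) {r c : ι → κ}
    (hr : Surjective r) (hc : Surjective c) : (B.submatrix r c).rank = B.rank := by
  refine le_antisymm (rank_submatrix_le B r c) ?_
  simpa [submatrix_submatrix, comp_surjInv] using
    rank_submatrix_le (B.submatrix r c) (surjInv hr) (surjInv hc)

namespace IsHermitian

variable {n : Type*} [Fintype n] [DecidableEq n] {A : Matrix n n ℝ}

theorem card_roots_charpoly (hA : A.IsHermitian) :
    Multiset.card A.charpoly.roots = Fintype.card n := by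
  simp [hA.roots_charpoly_eq_eigenvalues]

theorem count_roots_charpoly (hA : A.IsHermitian) (μ : ℝ) :
    A.charpoly.roots.count μ = finrank ℝ (eigenspace (toEuclideanLin A) μ) := by
  rw [← (isSymmetric_toEuclideanLin_iff.mpr hA).card_filter_eigenvalues_eq finrank_euclideanSpace,
    hA.roots_charpoly_eq_eigenvalues₀, Multiset.count_map]
  simp only [RCLike.ofReal_real_eq_id, eigenvalues₀, Finset.card,
    Real.ringHom_apply, eq_comm, Finset.filter_val]
  congr

theorem count_roots_charpoly_zero (hA : A.IsHermitian) :
    A.charpoly.roots.count 0 = Fintype.card n - A.rank := by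
  rw [hA.count_roots_charpoly, eigenspace_zero, A.rank_eq_finrank_range_toLin
    (EuclideanSpace.basisFun n ℝ).toBasis (EuclideanSpace.basisFun n ℝ).toBasis,
    ← toEuclideanLin_eq_toLin_orthonormal, ← finrank_euclideanSpace (𝕜 := ℝ),
    ← (toEuclideanLin A).finrank_range_add_finrank_ker]
  omega

theorem count_roots_charpoly_le_one (hA : A.IsHermitian) {μ : ℝ} (i₀ : n)
    (h : ∀ v, A *ᵥ v = μ • v → v i₀ = 0 → v = 0) : A.charpoly.roots.count μ ≤ 1 := by
  rw [hA.count_roots_charpoly, ← finrank_self ℝ]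
  refine LinearMap.finrank_le_finrank_of_injective
    (f := (EuclideanSpace.proj i₀).toLinearMap ∘ₗ (eigenspace (toEuclideanLin A) μ).subtype) ?_
  rw [← LinearMap.ker_eq_bot, LinearMap.ker_eq_bot']
  rintro ⟨x, hx⟩ hx₀
  rw [mem_eigenspace_iff] at hx
  ext1
  exact WithLp.ofLp_injective 2 (h x (congrArg WithLp.ofLp hx) hx₀)

end IsHermitian

end Matrix

theorem seq_eq_zero_of_mul_eq_add {R : Type*} [Ring R] {f : ℕ → R} {μ : R} {L : ℕ}
    (h0 : f 0 = 0) (h1 : f 1 = 0) (hrec : ∀ i < L, μ * f (i + 1) = f i + f (i + 2)) :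
    ∀ i ≤ L + 1, f i = 0 := by
  suffices h : ∀ i ≤ L, f i = 0 ∧ f (i + 1) = 0 from fun i hi =>
    if hiL : i ≤ L then (h i hiL).1 else by simpa [show i = L + 1 by omega] using (h L le_rfl).2
  intro i hi
  induction i with
  | zero => exact ⟨h0, h1⟩
  | succ i ih =>
    obtain ⟨hi₀, hi₁⟩ := ih (by omega)
    refine ⟨hi₁, ?_⟩
    have := hrec i (by omega)
    rwa [hi₀, hi₁, mul_zero, zero_add, eq_comm] at this

theorem seq_eq_zero_of_add_eq_zero {R : Type*} [Ring R] {f : ℕ → R} {m : ℕ} (hm : Even m)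
    (h0 : f 0 = 0) (hlast : f (m + 1) = 0) (hrec : ∀ i < m, f i + f (i + 2) = 0) :
    ∀ i ≤ m + 1, f i = 0 := by
  have heven : ∀ g : ℕ → R, g 0 = 0 → (∀ i < m, g i + g (i + 2) = 0) →
      ∀ t, 2 * t ≤ m + 1 → g (2 * t) = 0 := by
    intro g hg0 hg t ht
    induction t with
    | zero => exact hg0
    | succ t ih =>
      have := hg (2 * t) (by omega)
      rwa [ih (by omega), zero_add] at this
  -- the odd-indexed terms are the even-indexed terms of the reversed sequence
  have hodd := heven (fun i => f (m + 1 - i)) (by simpa using hlast) fun i hi => by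
    simpa [show m + 1 - (i + 2) = m - 1 - i by omega, show m + 1 - i = m - 1 - i + 2 by omega,
      add_comm] using hrec (m - 1 - i) (by omega)
  intro i hi
  obtain ⟨t, rfl | rfl⟩ := Nat.even_or_odd' i
  · exact heven f h0 hrec t hi
  · obtain ⟨s, rfl⟩ := hm
    simpa [show s + s + 1 - 2 * (s - t) = 2 * t + 1 by omega] using hodd (s - t) (by omega)

/-- `w` placed at positions `1, …, m`; the zeros at `0` and `m + 1` make every row of the path's
adjacency matrix read `f i + f (i + 2)`, endpoints included. -/
def paddedSeq {R : Type*} [Zero R] {m : ℕ} (w : Fin m → R) (i : ℕ) : R :=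
  if h : 0 < i ∧ i ≤ m then w ⟨i - 1, by omega⟩ else 0

section paddedSeq

variable {R : Type*} [Zero R] {m : ℕ} (w : Fin m → R)

@[simp] theorem paddedSeq_zero : paddedSeq w 0 = 0 := by simp [paddedSeq]

theorem paddedSeq_succ (i : Fin m) : paddedSeq w (i + 1) = w i := by
  simp [paddedSeq, i.isLt]

theorem paddedSeq_of_gt {i : ℕ} (h : m < i) : paddedSeq w i = 0 := by
  simp only [paddedSeq, dite_eq_right_iff]
  omega

end paddedSeq

instance (m : ℕ) : DecidableRel (pathGraph m).Adj :=
  fun _ _ => decidable_of_iff _ pathGraph_adj.symm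

theorem adjMatrix_pathGraph_mulVec_apply {R : Type*} [NonAssocSemiring R] {m : ℕ}
    (w : Fin m → R) (i : Fin m) :
    ((pathGraph m).adjMatrix R *ᵥ w) i = paddedSeq w i + paddedSeq w (i + 2) := by
  set f := paddedSeq w
  have hsplit : ∀ j : ℕ, (if (i : ℕ) + 1 = j ∨ j + 1 = i then (1 : R) else 0) * f (j + 1) =
      (if (i : ℕ) + 1 = j then f (j + 1) else 0) + (if j + 1 = i then f (j + 1) else 0) := by
    intro j
    split_ifs <;> first | omega | simp
  simp only [mulVec, dotProduct, adjMatrix_apply, pathGraph_adj, ← paddedSeq_succ w]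
  rw [Fin.sum_univ_eq_sum_range
      (fun j => (if (i : ℕ) + 1 = j ∨ j + 1 = i then 1 else 0) * f (j + 1)),
    Finset.sum_congr rfl fun j _ => hsplit j, Finset.sum_add_distrib, Finset.sum_ite_eq,
    add_comm]
  congr 1
  · have := Finset.sum_range_succ' (fun j => if j = (i : ℕ) then f j else 0) m
    simp only [Finset.sum_ite_eq', Finset.mem_range, paddedSeq_zero, ite_self, add_zero, f] at this
    rw [if_pos (by omega)] at this
    exact this.symm
  · split_ifs with h
    · rfl
    · exact (paddedSeq_of_gt w (by rw [Finset.mem_range] at h; omega)).symm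

theorem det_adjMatrix_pathGraph_ne_zero {R : Type*} [CommRing R] [IsDomain R] {m : ℕ}
    (hm : Even m) : ((pathGraph m).adjMatrix R).det ≠ 0 := by
  rw [Ne, ← exists_mulVec_eq_zero_iff]
  rintro ⟨w, hw0, hw⟩
  have hrec : ∀ i < m, paddedSeq w i + paddedSeq w (i + 2) = 0 := fun i hi => by
    rw [← adjMatrix_pathGraph_mulVec_apply w ⟨i, hi⟩, hw, Pi.zero_apply]
  have hzero := seq_eq_zero_of_add_eq_zero hm (paddedSeq_zero w)
    (paddedSeq_of_gt w (Nat.lt_succ_self m)) hrec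
  exact hw0 (funext fun j => by rw [← paddedSeq_succ w, hzero _ (by omega), Pi.zero_apply])

def broomCollapse (N n : ℕ) : Fin n → Fin (N + 1) := fun j => ⟨min (j : ℕ) N, by omega⟩

section Broom

variable {N n : ℕ}

@[simp] theorem broomCollapse_val (j : Fin n) : (broomCollapse N n j : ℕ) = min (j : ℕ) N := rfl

theorem broomCollapse_surjective (h : N < n) : Surjective (broomCollapse N n) :=
  fun k => ⟨⟨k, by omega⟩, Fin.ext (by simp only [broomCollapse_val, inf_eq_left]; omega)⟩

theorem adjMatrix_pathGraph_submatrix_broomCollapse_apply {R : Type*} [Zero R] [One R]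
    (hN : 0 < N) (i j : Fin n) :
    ((pathGraph (N + 1)).adjMatrix R).submatrix (broomCollapse N n) (broomCollapse N n) i j =
      if (i.val + 1 = j.val ∧ j.val < N) ∨ (j.val + 1 = i.val ∧ i.val < N) ∨
         (i.val = N - 1 ∧ N ≤ j.val) ∨ (j.val = N - 1 ∧ N ≤ i.val)
      then 1 else 0 := by
  simp only [submatrix_apply, adjMatrix_apply, pathGraph_adj, broomCollapse_val]
  congr 1
  apply propext
  omega

theorem broom_eigenvector_eq_zero {R : Type*} [CommRing R] [IsDomain R] (hN : 0 < N)
    (hNn : N < n) {μ : R} (hμ : μ ≠ 0) {v : Fin n → R}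
    (hv : ((pathGraph (N + 1)).adjMatrix R).submatrix (broomCollapse N n) (broomCollapse N n) *ᵥ v
      = μ • v)
    (h0 : v ⟨0, by omega⟩ = 0) : v = 0 := by
  set w : Fin (N + 1) → R := fun k => ∑ j with broomCollapse N n j = k, v j
  have hrow : ∀ i, μ * v i =
      paddedSeq w (broomCollapse N n i) + paddedSeq w (broomCollapse N n i + 2) := fun i => by
    rw [← adjMatrix_pathGraph_mulVec_apply, ← submatrix_mulVec_apply, hv, Pi.smul_apply,
      smul_eq_mul]
  have hpath : ∀ i : Fin n, i < N → paddedSeq w (i + 1) = v i := fun i hi => by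
    have hfiber : ({j | broomCollapse N n j = ⟨i, by omega⟩} : Finset (Fin n)) = {i} := by
      ext j
      simp only [Fin.ext_iff, broomCollapse_val, Finset.mem_filter, Finset.mem_univ, true_and,
        Finset.mem_singleton]
      omega
    rw [show (i : ℕ) = ((⟨i, by omega⟩ : Fin (N + 1)) : ℕ) from rfl, paddedSeq_succ]
    simp only [w, hfiber, Finset.sum_singleton]
  have hzero : ∀ k ≤ N + 1, paddedSeq w k = 0 := by
    refine seq_eq_zero_of_mul_eq_add (μ := μ) (paddedSeq_zero _) ?_ fun k hk => ?_
    · rw [← h0]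
      exact hpath ⟨0, by omega⟩ hN
    · have := hrow ⟨k, by omega⟩
      rwa [← hpath ⟨k, by omega⟩ hk, broomCollapse_val, min_eq_left hk.le] at this
  funext i
  by_cases hi : i < N
  · rw [← hpath i hi, hzero _ (by omega), Pi.zero_apply]
  · have := hrow i
    rw [broomCollapse_val, min_eq_right (by omega), hzero N (by omega),
      paddedSeq_of_gt _ (by omega), add_zero] at this
    exact (mul_eq_zero.mp this).resolve_left hμ

end Broom

theorem broom_tree_simple_eigenvalues_general
    (n N : ℕ) (hN : Odd N) (hNn : N < n - 2)
    (M : Matrix (Fin n) (Fin n) ℝ)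
    (hM : ∀ i j : Fin n, M i j =
      if (i.val + 1 = j.val ∧ j.val < N) ∨ (j.val + 1 = i.val ∧ i.val < N) ∨
         (i.val = N - 1 ∧ N ≤ j.val) ∨ (j.val = N - 1 ∧ N ≤ i.val)
      then 1 else 0) :
    M.rank = N + 1 ∧
    (∀ μ : ℝ, μ ≠ 0 → M.charpoly.roots.count μ ≤ 1) ∧
    (M.charpoly.roots.toFinset.filter
      (fun μ => M.charpoly.roots.count μ = 1)).card = N + 1 := by
  have hM' : M = ((pathGraph (N + 1)).adjMatrix ℝ).submatrix
      (broomCollapse N n) (broomCollapse N n) :=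
    Matrix.ext fun i j => (hM i j).trans
      (adjMatrix_pathGraph_submatrix_broomCollapse_apply hN.pos i j).symm
  have hc := broomCollapse_surjective (N := N) (n := n) (by omega)
  have hH : M.IsHermitian := hM' ▸ (isHermitian_adjMatrix ℝ _).submatrix (broomCollapse N n)
  have hrank : M.rank = N + 1 := by
    rw [hM', rank_submatrix_of_surjective _ hc hc, rank_of_isUnit _ ((isUnit_iff_isUnit_det _).mpr
      (isUnit_iff_ne_zero.mpr (det_adjMatrix_pathGraph_ne_zero hN.add_one))), Fintype.card_fin]
  have hsimple : ∀ μ : ℝ, μ ≠ 0 → M.charpoly.roots.count μ ≤ 1 := fun μ hμ =>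
    hH.count_roots_charpoly_le_one ⟨0, by omega⟩ fun _ hv h0 =>
      broom_eigenvector_eq_zero hN.pos (by omega) hμ (hM' ▸ hv) h0
  have hzero : M.charpoly.roots.count 0 = n - (N + 1) := by
    rw [hH.count_roots_charpoly_zero, hrank, Fintype.card_fin]
  refine ⟨hrank, hsimple, ?_⟩
  rw [Multiset.card_filter_count_eq_one _ 0 (by omega) hsimple, hzero, hH.card_roots_charpoly,
    Fintype.card_fin]
  omega

/-- The broom tree `T` on `n` vertices (`n` even, `N < n - 2` odd): a path on
vertices `0, ..., N-1` with the `n - N` remaining vertices attached as leaves to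
vertex `N-1`.  Its adjacency matrix `M` has rank `N + 1`, every nonzero eigenvalue
of `M` is simple, and hence `M` has exactly `N + 1` simple eigenvalues. -/
theorem broom_tree_simple_eigenvalues
    (n N : ℕ) (hn : Even n) (hN : Odd N) (hNn : N < n - 2)
    (M : Matrix (Fin n) (Fin n) ℝ)
    (hM : ∀ i j : Fin n, M i j =
      if (i.val + 1 = j.val ∧ j.val < N) ∨ (j.val + 1 = i.val ∧ i.val < N) ∨
         (i.val = N - 1 ∧ N ≤ j.val) ∨ (j.val = N - 1 ∧ N ≤ i.val)
      then 1 else 0) :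
    M.rank = N + 1 ∧
    (∀ μ : ℝ, μ ≠ 0 → M.charpoly.roots.count μ ≤ 1) ∧
    (M.charpoly.roots.toFinset.filter
      (fun μ => M.charpoly.roots.count μ = 1)).card = N + 1 :=
  broom_tree_simple_eigenvalues_general n N hN hNn M hM
end
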